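/- arXiv:1605.07411 — 8 statements merged into one kernel-verified Lean document; each statement's English description precedes it below -/
import Mathlib

section
/- Every tournament on n vertices contains a transitive subtournament on at least 1 + ⌊log₂ n⌋ vertices. -/
lemma erdos_moser_aux {V : Type*} (T : V → V → Prop)
    (hasym : ∀ x y, T x y → ¬ T y x)
    (htotal : ∀ x y : V, x ≠ y → T x y ∨ T y x) :
    ∀ m : ℕ, 1 ≤ m → ∀ s : Finset V, m ≤ s.card →
      ∃ l : List V, l.length = 1 + Nat.log 2 m ∧ (∀ x ∈ l, x ∈ s) ∧ l.Pairwise T := by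
  intro m
  induction m using Nat.strong_induction_on with
  | _ m ih =>
    intro hm s hs
    classical
    rcases eq_or_lt_of_le hm with h1 | h2
    · obtain ⟨v, hv⟩ := Finset.card_pos.mp (by omega : 0 < s.card)
      exact ⟨[v], by simp [← h1], by simp [hv], by simp⟩
    · obtain ⟨v, hv⟩ := Finset.card_pos.mp (by omega : 0 < s.card)
      set A := (s.erase v).filter (fun x => T v x) with hA
      set B := (s.erase v).filter (fun x => ¬ T v x) with hB
      have hAB : A.card + B.card = (s.erase v).card :=
        Finset.card_filter_add_card_filter_not _
      have hcard : s.card - 1 ≤ A.card + B.card := by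
        rw [hAB, Finset.card_erase_of_mem hv]
      have hm2 : 1 ≤ m / 2 := by omega
      have hlt : m / 2 < m := by omega
      have hlog : Nat.log 2 m = Nat.log 2 (m / 2) + 1 := by
        have h0 : 0 < Nat.log 2 m := Nat.log_pos (by norm_num) (by omega)
        have := Nat.log_div_base 2 m
        omega
      rcases (by omega : m / 2 ≤ A.card ∨ m / 2 ≤ B.card) with hc | hc
      · obtain ⟨l, hlen, hmem, hpair⟩ := ih (m / 2) hlt hm2 A hc
        refine ⟨v :: l, ?_, ?_, ?_⟩
        · simp only [List.length_cons, hlen, hlog]; omega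
        · intro x hx
          rcases List.mem_cons.mp hx with rfl | hx
          · exact hv
          · exact Finset.mem_of_mem_erase (Finset.mem_of_mem_filter _ (hmem x hx))
        · refine List.pairwise_cons.mpr ⟨fun x hx => ?_, hpair⟩
          exact (Finset.mem_filter.mp (hmem x hx)).2
      · obtain ⟨l, hlen, hmem, hpair⟩ := ih (m / 2) hlt hm2 B hc
        refine ⟨l ++ [v], ?_, ?_, ?_⟩
        · rw [List.length_append, hlen, hlog]; simp; omega
        · intro x hx
          rcases List.mem_append.mp hx with hx | hx
          · exact Finset.mem_of_mem_erase (Finset.mem_of_mem_filter _ (hmem x hx))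
          · rw [List.mem_singleton.mp hx]; exact hv
        · refine List.pairwise_append.mpr ⟨hpair, by simp, ?_⟩
          intro x hx y hy
          rw [List.mem_singleton.mp hy]
          have hxB := Finset.mem_filter.mp (hmem x hx)
          have hne : x ≠ v := Finset.ne_of_mem_erase hxB.1
          rcases htotal x v hne with h | h
          · exact h
          · exact absurd h hxB.2

/-- Erdős–Moser: every tournament on `n` vertices contains a transitive
subtournament on at least `1 + ⌊log₂ n⌋` vertices. -/
theorem stmt1 {V : Type*} [Fintype V] (n : ℕ) (hn : Fintype.card V = n)
    (hn1 : 1 ≤ n) (T : V → V → Prop)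
    (hasym : ∀ x y, T x y → ¬ T y x)
    (htotal : ∀ x y : V, x ≠ y → T x y ∨ T y x) :
    ∃ f : Fin (1 + Nat.log 2 n) ↪ V, ∀ i j, i < j → T (f i) (f j) := by
  obtain ⟨l, hlen, -, hpair⟩ := erdos_moser_aux T hasym htotal n hn1 Finset.univ
    (by simp [hn])
  have hget : ∀ i j : Fin l.length, i < j → T (l.get i) (l.get j) :=
    List.pairwise_iff_get.mp hpair
  refine ⟨⟨fun i => l.get (Fin.cast hlen.symm i), ?_⟩, ?_⟩
  · intro i j hij
    by_contra hne
    have hij' : l.get (Fin.cast hlen.symm i) = l.get (Fin.cast hlen.symm j) := hij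
    have hgne : (Fin.cast hlen.symm i : Fin l.length) ≠ Fin.cast hlen.symm j := by
      intro h
      exact hne (Fin.ext (by simpa [Fin.ext_iff] using h))
    rcases hgne.lt_or_gt with h | h
    · have h2 := hget _ _ h
      rw [hij'] at h2
      exact hasym _ _ h2 h2
    · have h2 := hget _ _ h
      rw [hij'] at h2
      exact hasym _ _ h2 h2
  · intro i j hij
    exact hget _ _ hij
end

section
/- Let ℓ ≥ 3 and let D be an oriented graph with no induced TT3 and no induced out-star S_{0,ℓ}. Then χ(D) ≤ 2ℓ - 2. -/
/-- The underlying simple graph of a digraph given by its arc relation. -/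
def underlying {V : Type*} (A : V → V → Prop) : SimpleGraph V where
  Adj x y := x ≠ y ∧ (A x y ∨ A y x)
  symm := by constructor; intro x y h; exact ⟨h.1.symm, h.2.symm⟩
  loopless := by constructor; intro x h; exact h.1 rfl

/-!
Without an induced `TT3` every out-neighbourhood is independent, so forbidding `S_{0,ℓ}` bounds
all out-degrees by `ℓ - 1`. Hence every vertex set `S` spans at most `(ℓ - 1)|S|` arcs: the
underlying graph has average degree at most `N = 2ℓ - 2` on every vertex set, and it has no `K₄`
(a `4`-clique carries `6` arcs, but each of its vertices has at most one out-neighbour in it).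
A minimal set that is not `N`-colourable has minimum degree at least `N`, so it is `N`-regular,
and Brooks' theorem (`N ≥ 4`) colours it after all.

Brooks' theorem is proved along Lovász's lines. Low-degree vertices are coloured last and
colourings are glued at cut vertices. In the `2`-connected regular case there is a vertex `x`
with non-adjacent neighbours `a`, `b` such that `S - a - b` is connected; `a` and `b` get the same
colour, the rest is coloured greedily towards `x`, and `x` finds a free colour.
-/

open Finset

namespace SimpleGraph

open scoped Classical

variable {V α : Type*} (G : SimpleGraph V)

def restrictTo (P : Set V) : SimpleGraph V where
  Adj u v := u ∈ P ∧ v ∈ P ∧ G.Adj u v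
  symm := ⟨fun _ _ h => ⟨h.2.1, h.1, h.2.2.symm⟩⟩
  loopless := ⟨fun _ h => G.loopless.irrefl _ h.2.2⟩

def PreconnectedOn (P : Set V) : Prop :=
  ∀ u ∈ P, ∀ v ∈ P, (G.restrictTo P).Reachable u v

def IsClosedIn (P D : Set V) : Prop :=
  ∀ ⦃u v⦄, u ∈ D → v ∈ P → G.Adj u v → v ∈ D

/-- A nonempty proper union of connected components of `G[P]`. -/
structure IsFragment (P D : Set V) : Prop where
  subset : D ⊆ P
  nonempty : D.Nonempty
  isClosedIn : G.IsClosedIn P D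
  diff_nonempty : (P \ D).Nonempty

def IsProperOn (P : Set V) (c : V → α) : Prop :=
  ∀ ⦃u⦄, u ∈ P → ∀ ⦃w⦄, w ∈ P → G.Adj u w → c u ≠ c w

variable {G} {P Q D : Set V} {u v x y a b : V}

section Connectivity

lemma restrictTo_mono (h : P ⊆ Q) : G.restrictTo P ≤ G.restrictTo Q :=
  fun _ _ huv => ⟨h huv.1, h huv.2.1, huv.2.2⟩

lemma Reachable.mem_of_isClosedIn (hD : G.IsClosedIn P D) (hu : u ∈ D)
    (h : (G.restrictTo P).Reachable u v) : v ∈ D := by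
  rw [reachable_iff_reflTransGen] at h
  induction h with
  | refl => exact hu
  | tail _ hstep ih => exact hD ih hstep.2.1 hstep.2.2

lemma isClosedIn_setOf_reachable (P : Set V) (z : V) :
    G.IsClosedIn P {v | v ∈ P ∧ (G.restrictTo P).Reachable z v} :=
  fun _ _ hu hv huv => ⟨hv, hu.2.trans (Adj.reachable ⟨hu.1, hv, huv⟩)⟩

lemma PreconnectedOn.subset_of_isClosedIn (hP : G.PreconnectedOn P) (hD : G.IsClosedIn P D)
    (hxP : x ∈ P) (hxD : x ∈ D) : P ⊆ D :=
  fun _ hv => (hP x hxP _ hv).mem_of_isClosedIn hD hxD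

lemma PreconnectedOn.not_isFragment (hP : G.PreconnectedOn P) : ¬ G.IsFragment P D := by
  rintro ⟨hDP, ⟨x, hx⟩, hD, ⟨r, hrP, hrD⟩⟩
  exact hrD (hP.subset_of_isClosedIn hD (hDP hx) hx hrP)

lemma exists_isFragment_of_not_preconnectedOn {P : Finset V} (hP : ¬ G.PreconnectedOn P) :
    ∃ D : Finset V, G.IsFragment P D := by
  simp only [PreconnectedOn, not_forall] at hP
  obtain ⟨z, hz, w, hw, hzw⟩ := hP
  refine ⟨{v ∈ P | (G.restrictTo P).Reachable z v}, fun v hv => (mem_filter.mp hv).1,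
    ⟨z, by simpa using hz⟩, ?_, ⟨w, hw, fun h => hzw (mem_filter.mp h).2⟩⟩
  rw [coe_filter]
  exact isClosedIn_setOf_reachable _ z

lemma IsFragment.compl (hD : G.IsFragment P D) : G.IsFragment P (P \ D) where
  subset := Set.sdiff_subset
  nonempty := hD.diff_nonempty
  isClosedIn _ _ hu hv huv := ⟨hv, fun hvD => hu.2 (hD.isClosedIn hvD hu.1 huv.symm)⟩
  diff_nonempty := by
    obtain ⟨z, hz⟩ := hD.nonempty
    exact ⟨z, hD.subset hz, fun h => h.2 hz⟩

lemma IsFragment.exists_adj (hD : G.IsFragment (P \ {x}) D) (hP : G.PreconnectedOn P) :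
    ∃ a ∈ D, G.Adj x a := by
  by_contra! h
  refine hP.not_isFragment (D := D) ⟨hD.subset.trans Set.sdiff_subset, hD.nonempty, ?_, ?_⟩
  · intro u v hu hv huv
    by_cases hvx : v = x
    · exact absurd (hvx ▸ huv.symm) (h u hu)
    · exact hD.isClosedIn hu ⟨hv, hvx⟩ huv
  · obtain ⟨r, hr, hrD⟩ := hD.diff_nonempty
    exact ⟨r, hr.1, hrD⟩

/-- A shortest path between two non-adjacent vertices starts with an induced path on three
vertices. -/
lemma PreconnectedOn.exists_adj_adj_not_adj (hP : G.PreconnectedOn P) (hu : u ∈ P)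
    (hv : v ∈ P) (huv : u ≠ v) (hnadj : ¬ G.Adj u v) :
    ∃ x ∈ P, ∃ a ∈ P, ∃ b ∈ P, G.Adj x a ∧ G.Adj x b ∧ a ≠ b ∧ ¬ G.Adj a b := by
  obtain ⟨p, hp⟩ := (hP u hu v hv).exists_walk_length_eq_dist
  have hdist : 1 < (G.restrictTo P).dist u v := by
    have h0 := (hP u hu v hv).pos_dist_of_ne huv
    have h1 : (G.restrictTo P).dist u v ≠ 1 := fun h => hnadj (dist_eq_one_iff_adj.mp h).2.2
    omega
  obtain ⟨a, x, b, hax, hxb, hab, hne⟩ := p.exists_adj_adj_not_adj_ne hp hdist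
  exact ⟨x, hax.2.1, a, hax.1, b, hxb.2.1, hax.2.2.symm, hxb.2.2, hne,
    fun h => hab ⟨hax.1, hxb.2.1, h⟩⟩

lemma Reachable.exists_adj_dist_lt (h : G.Reachable v x) (hne : v ≠ x) :
    ∃ w, G.Adj v w ∧ G.dist w x < G.dist v x := by
  obtain ⟨p, hp⟩ := h.exists_walk_length_eq_dist
  have hnil : ¬ p.Nil := fun hn => hne hn.eq
  refine ⟨p.snd, p.adj_snd hnil, ?_⟩
  have := dist_le p.tail
  have := p.length_tail_add_one hnil
  omega

end Connectivity

section TwoConnected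

variable {S : Finset V}

lemma IsClosedIn.mem_or_eq_or_eq (hD : G.IsClosedIn (↑S \ {x, y}) D) (hu : u ∈ D)
    (hv : v ∈ S) (huv : G.Adj u v) : v ∈ D ∨ v = x ∨ v = y := by
  by_cases hvxy : v = x ∨ v = y
  · exact Or.inr hvxy
  · exact Or.inl (hD hu ⟨hv, hvxy⟩ huv)

lemma preconnectedOn_diff_pair (hD : G.IsClosedIn (↑S \ {x, y}) D) (haD : a ∈ D)
    (hb : G.PreconnectedOn (↑S \ {b})) (hx : x ∈ (↑S : Set V) \ {a, b})
    (hxy : (G.restrictTo (↑S \ {a, b})).Reachable x y)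
    (hxD : ∀ v ∈ D, v ≠ a → (G.restrictTo (↑S \ {a, b})).Reachable x v) :
    G.PreconnectedOn (↑S \ {a, b}) := by
  set T : Set V := ↑S \ {a, b}
  set Q : Set V := {v | v ∈ T ∧ (G.restrictTo T).Reachable x v}
  have hQ : G.IsClosedIn T Q := isClosedIn_setOf_reachable T x
  suffices hTQ : ∀ v ∈ T, (G.restrictTo T).Reachable x v from
    fun u hu w hw => (hTQ u hu).symm.trans (hTQ w hw)
  by_contra! ⟨v₀, hv₀, hxv₀⟩
  refine hb.not_isFragment (D := T \ Q) ⟨fun v hv => ⟨hv.1.1, fun h => hv.1.2 (Or.inr h)⟩,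
    ⟨v₀, hv₀, fun h => hxv₀ h.2⟩, ?_,
    ⟨x, ⟨hx.1, fun h => hx.2 (Or.inr h)⟩, fun h => h.2 ⟨hx, .rfl⟩⟩⟩
  rintro u v ⟨huT, huQ⟩ ⟨hvS, hvb⟩ huv
  have hva : v ≠ a := by
    rintro rfl
    rcases hD.mem_or_eq_or_eq haD huT.1 huv.symm with huD | rfl | rfl
    · exact huQ ⟨huT, hxD u huD fun h => huT.2 (Or.inl h)⟩
    · exact huQ ⟨huT, .rfl⟩
    · exact huQ ⟨huT, hxy⟩
  have hvT : v ∈ T := ⟨hvS, by rintro (h | h); exacts [hva h, hvb h]⟩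
  exact ⟨hvT, fun hvQ => huQ (hQ hvQ huT huv.symm)⟩

lemma IsFragment.isFragment_filter_not_reachable {D : Finset V}
    (hD : G.IsFragment (↑S \ {x, y}) ↑D) (hx : x ∈ S) (hxy : x ≠ y) (haD : a ∈ D) (hbD : b ∉ D)
    (hxb : x ≠ b) (hZ : ∃ v ∈ D, v ≠ a ∧ ¬ (G.restrictTo (↑S \ {a, b})).Reachable x v) :
    G.IsFragment (↑S \ {y, a})
      ↑{v ∈ D | v ≠ a ∧ ¬ (G.restrictTo (↑S \ {a, b})).Reachable x v} := by
  have hDT : ∀ v ∈ D, v ≠ a → v ∈ (↑S : Set V) \ {a, b} := fun v hv hva =>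
    ⟨(hD.subset hv).1, by rintro (rfl | rfl); exacts [hva rfl, hbD hv]⟩
  have hxD : x ∉ D := fun h => by simpa using hD.subset h
  have hxa : x ≠ a := (ne_of_mem_of_not_mem haD hxD).symm
  have hxT : x ∈ (↑S : Set V) \ {a, b} := by simp [hx, hxa, hxb]
  refine ⟨fun v hv => ?_, ?_, fun u v hu hv huv => ?_, ⟨x, by simp [hx, hxy, hxa], by simp [hxD]⟩⟩
  · rw [coe_filter] at hv
    exact ⟨(hD.subset hv.1).1, by rintro (h | h); exacts [(hD.subset hv.1).2 (Or.inr h), hv.2.1 h]⟩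
  · obtain ⟨v, hv⟩ := hZ
    exact ⟨v, by simpa using hv⟩
  rw [coe_filter] at hu ⊢
  have huT := hDT u hu.1 hu.2.1
  rcases hD.isClosedIn.mem_or_eq_or_eq hu.1 hv.1 huv with hvD | hvx | hvy
  · have hva : v ≠ a := fun h => hv.2 (Or.inr h)
    exact ⟨hvD, hva, fun hxv => hu.2.2 (hxv.trans (Adj.reachable ⟨hDT v hvD hva, huT, huv.symm⟩))⟩
  · exact (hu.2.2 (Adj.reachable ⟨hxT, huT, hvx ▸ huv.symm⟩)).elim
  · exact absurd (Or.inl hvy) hv.2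

lemma IsFragment.isFragment_erase {D : Finset V} (hdeg : 3 ≤ #{u ∈ S | G.Adj a u})
    (hD : G.IsFragment (↑S \ {x, y}) ↑D) (hy : y ∈ S) (hxy : x ≠ y) (haD : a ∈ D)
    (hbD : b ∉ D) (hyT : y ∈ (↑S : Set V) \ {a, b})
    (hxy' : ¬ (G.restrictTo (↑S \ {a, b})).Reachable x y)
    (hxD : ∀ v ∈ D, v ≠ a → (G.restrictTo (↑S \ {a, b})).Reachable x v) :
    G.IsFragment (↑S \ {x, a}) ↑(D.erase a) := by
  have hyD : y ∉ D := fun h => by simpa using hD.subset h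
  have hya : y ≠ a := (ne_of_mem_of_not_mem haD hyD).symm
  refine ⟨fun v hv => ?_, ?_, fun u v hu hv huv => ?_,
    ⟨y, by simp [hy, hxy.symm, hya], by simp [hyD]⟩⟩
  · rw [coe_erase] at hv
    exact ⟨(hD.subset hv.1).1, by rintro (h | h); exacts [(hD.subset hv.1).2 (Or.inl h), hv.2 h]⟩
  · by_contra hempty
    have hsub : {u ∈ S | G.Adj a u} ⊆ {x, y} := fun u hu => by
      obtain ⟨huS, hau⟩ := mem_filter.mp hu
      rcases hD.isClosedIn.mem_or_eq_or_eq haD huS hau with huD | rfl | rfl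
      · exact (hempty ⟨u, by simpa [hau.ne'] using huD⟩).elim
      all_goals simp
    have := (card_le_card hsub).trans card_le_two
    omega
  rw [coe_erase] at hu ⊢
  rcases hD.isClosedIn.mem_or_eq_or_eq hu.1 hv.1 huv with hvD | hvx | hvy
  · exact ⟨hvD, fun h => hv.2 (Or.inr h)⟩
  · exact absurd (Or.inl hvx) hv.2
  · have huT : u ∈ (↑S : Set V) \ {a, b} :=
      ⟨(hD.subset hu.1).1, by rintro (rfl | rfl); exacts [hu.2 rfl, hbD hu.1]⟩
    exact absurd ((hxD u hu.1 hu.2).trans (Adj.reachable ⟨huT, hyT, hvy ▸ huv⟩)) hxy'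

/-- Induction on the fragment `D` of a `2`-separator `{x, y}`: either the neighbours `a`, `b`
of `x` on the two sides leave `S` connected, or one of `{y, a}`, `{x, a}` separates off a
fragment strictly inside `D`. -/
lemma exists_adj_adj_not_adj_preconnectedOn_diff_of_isFragment
    (hdeg : ∀ v ∈ S, 3 ≤ #{u ∈ S | G.Adj v u}) (hconn : ∀ p ∈ S, G.PreconnectedOn (↑S \ {p}))
    {D : Finset V} (hx : x ∈ S) (hy : y ∈ S) (hxy : x ≠ y) (hD : G.IsFragment (↑S \ {x, y}) ↑D) :
    ∃ x a b, x ∈ S ∧ a ∈ S ∧ b ∈ S ∧ G.Adj x a ∧ G.Adj x b ∧ a ≠ b ∧ ¬ G.Adj a b ∧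
      G.PreconnectedOn (↑S \ {a, b}) := by
  induction D using Finset.strongInduction generalizing x y with
  | H D ih =>
  have hP : (↑S : Set V) \ {x, y} = (↑S \ {y}) \ {x} := by ext; simp; tauto
  obtain ⟨a, haD, hxa⟩ := (hP ▸ hD).exists_adj (hconn y hy)
  obtain ⟨b, ⟨⟨⟨hbS, hby⟩, hbx⟩, hbD⟩, hxb⟩ := (hP ▸ hD.compl).exists_adj (hconn y hy)
  obtain ⟨haS, hax, hay⟩ : a ∈ S ∧ a ≠ x ∧ a ≠ y := by simpa using hD.subset haD
  have hab : a ≠ b := by rintro rfl; exact hbD haD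
  have hnab : ¬ G.Adj a b := fun h =>
    hbD (hD.isClosedIn haD ⟨hbS, by rintro (h | h); exacts [hbx h, hby h]⟩ h)
  have hxT : x ∈ (↑S : Set V) \ {a, b} := ⟨hx, by rintro (h | h); exacts [hax h.symm, hbx h.symm]⟩
  by_cases hZ : ∃ v ∈ D, v ≠ a ∧ ¬ (G.restrictTo (↑S \ {a, b})).Reachable x v
  · exact ih _ (filter_ssubset.mpr ⟨a, haD, by simp⟩) hy haS hay.symm
      (hD.isFragment_filter_not_reachable hx hxy haD hbD hxb.ne hZ)
  push Not at hZ
  by_cases hxy' : (G.restrictTo (↑S \ {a, b})).Reachable x y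
  · exact ⟨x, a, b, hx, haS, hbS, hxa, hxb, hab, hnab,
      preconnectedOn_diff_pair hD.isClosedIn haD (hconn b hbS) hxT hxy' hZ⟩
  have hyT : y ∈ (↑S : Set V) \ {a, b} := ⟨hy, by rintro (h | h); exacts [hay h.symm, hby h.symm]⟩
  exact ih _ (erase_ssubset haD) hx haS hax.symm
    (hD.isFragment_erase (hdeg a haS) hy hxy haD hbD hyT hxy' hZ)

lemma exists_adj_adj_not_adj_preconnectedOn_diff (hdeg : ∀ v ∈ S, 3 ≤ #{u ∈ S | G.Adj v u})
    (hconn : ∀ p ∈ S, G.PreconnectedOn (↑S \ {p}))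
    (hP3 : ∃ x ∈ S, ∃ a ∈ S, ∃ b ∈ S, G.Adj x a ∧ G.Adj x b ∧ a ≠ b ∧ ¬ G.Adj a b) :
    ∃ x a b, x ∈ S ∧ a ∈ S ∧ b ∈ S ∧ G.Adj x a ∧ G.Adj x b ∧ a ≠ b ∧ ¬ G.Adj a b ∧
      G.PreconnectedOn (↑S \ {a, b}) := by
  obtain ⟨x, hx, a, ha, b, hb, hxa, hxb, hab, hnab⟩ := hP3
  by_cases h : G.PreconnectedOn (↑S \ {a, b})
  · exact ⟨x, a, b, hx, ha, hb, hxa, hxb, hab, hnab, h⟩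
  obtain ⟨D, hD⟩ := exists_isFragment_of_not_preconnectedOn (P := S \ {a, b}) (by simpa using h)
  exact exists_adj_adj_not_adj_preconnectedOn_diff_of_isFragment hdeg hconn ha hb hab
    (by simpa using hD)

end TwoConnected

lemma IsClique.filter_adj_eq_erase {K : Finset V} (hK : G.IsClique ↑K) (hv : v ∈ K) :
    {u ∈ K | G.Adj v u} = K.erase v := by
  ext u
  simp only [mem_filter, mem_erase]
  exact ⟨fun h => ⟨h.2.ne', h.1⟩, fun h => ⟨h.2, hK hv h.2 (Ne.symm h.1)⟩⟩

section Coloring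

lemma IsProperOn.mono {c : V → α} (hc : G.IsProperOn Q c) (h : P ⊆ Q) : G.IsProperOn P c :=
  fun _ hu _ hw huw => hc (h hu) (h hw) huw

/-- Permute the colours of `c₂` so that it agrees with `c₁` at `p`. -/
lemma exists_isProperOn_union {S₁ S₂ : Set V} {p : V} {c₁ c₂ : V → α}
    (hc₁ : G.IsProperOn S₁ c₁) (hc₂ : G.IsProperOn S₂ c₂) (hinter : S₁ ∩ S₂ ⊆ {p})
    (hnadj : ∀ u ∈ S₁ \ S₂, ∀ w ∈ S₂ \ S₁, ¬ G.Adj u w) :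
    ∃ c : V → α, G.IsProperOn (S₁ ∪ S₂) c := by
  set σ := Equiv.swap (c₂ p) (c₁ p)
  set c : V → α := fun v => if v ∈ S₁ then c₁ v else σ (c₂ v)
  have across : ∀ ⦃u⦄, u ∈ S₁ → ∀ ⦃w⦄, w ∈ S₂ → w ∉ S₁ → G.Adj u w → c u ≠ c w := by
    intro u hu w hw hw₁ huw
    have hu₂ : u ∈ S₂ := by_contra fun hu₂ => hnadj u ⟨hu, hu₂⟩ w ⟨hw, hw₁⟩ huw
    obtain rfl : u = p := hinter ⟨hu, hu₂⟩
    calc c u = σ (c₂ u) := by simp [c, σ, hu]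
      _ ≠ σ (c₂ w) := σ.injective.ne (hc₂ hu₂ hw huw)
      _ = c w := by simp [c, hw₁]
  refine ⟨c, fun u hu w hw huw => ?_⟩
  by_cases hu₁ : u ∈ S₁ <;> by_cases hw₁ : w ∈ S₁
  · simpa [c, hu₁, hw₁] using hc₁ hu₁ hw₁ huw
  · exact across hu₁ (hw.resolve_left hw₁) hw₁ huw
  · exact (across hw₁ (hu.resolve_left hu₁) hu₁ huw.symm).symm
  · simpa [c, hu₁, hw₁] using hc₂ (hu.resolve_left hu₁) (hw.resolve_left hw₁) huw

variable {S : Finset V}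

/-- A separating vertex `p` splits `S` into two smaller pieces meeting only in `p`. -/
lemma exists_isProperOn_of_isFragment (hsub : ∀ T ⊂ S, ∃ c : V → α, G.IsProperOn ↑T c)
    {p : V} {D : Finset V} (hp : p ∈ S) (hD : G.IsFragment (↑S \ {p}) ↑D) :
    ∃ c : V → α, G.IsProperOn ↑S c := by
  have hDS : ∀ v ∈ D, v ∈ S ∧ v ≠ p := fun v hv => by simpa using hD.subset hv
  obtain ⟨z, hz⟩ := hD.nonempty
  obtain ⟨r, ⟨hrS, hrp⟩, hrD⟩ := hD.diff_nonempty
  obtain ⟨c₁, hc₁⟩ := hsub (insert p D) <|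
    (ssubset_iff_of_subset (insert_subset hp fun v hv => (hDS v hv).1)).mpr
      ⟨r, hrS, by simpa using ⟨hrp, hrD⟩⟩
  obtain ⟨c₂, hc₂⟩ := hsub (S \ D) <| sdiff_ssubset (fun v hv => (hDS v hv).1) ⟨z, hz⟩
  obtain ⟨c, hc⟩ := exists_isProperOn_union hc₁ hc₂ (p := p) (fun v hv => by
      simp only [coe_insert, coe_sdiff, Set.mem_inter_iff, Set.mem_insert_iff, mem_coe,
        Set.mem_sdiff] at hv
      exact hv.1.resolve_right hv.2.2)
    fun u hu w hw huw => by
      simp only [coe_insert, coe_sdiff, Set.mem_sdiff, Set.mem_insert_iff, mem_coe] at hu hw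
      have huD : u ∈ D := hu.1.resolve_left fun h => hu.2 ⟨h ▸ hp, (hDS u · |>.2 h)⟩
      exact hw.1.2 (hD.isClosedIn huD ⟨hw.1.1, fun h => hw.2 (Or.inl h)⟩ huw)
  refine ⟨c, hc.mono fun v hv => ?_⟩
  by_cases hvD : v ∈ D
  · exact Or.inl (by simp [hvD])
  · exact Or.inr (by simpa using ⟨hv, hvD⟩)

lemma card_image_filter_adj_lt {T : Finset V} {k : ℕ} {c : V → α}
    (hdeg : #{u ∈ T | G.Adj x u} ≤ k) (ha : a ∈ T) (hb : b ∈ T) (hxa : G.Adj x a)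
    (hxb : G.Adj x b) (hab : a ≠ b) (hc : c a = c b) : #({u ∈ T | G.Adj x u}.image c) < k := by
  set X := {u ∈ T | G.Adj x u}
  have hbX : b ∈ X := mem_filter.mpr ⟨hb, hxb⟩
  have hsub : X.image c ⊆ (X.erase b).image c := by
    intro col hcol
    obtain ⟨u, hu, rfl⟩ := mem_image.mp hcol
    by_cases hub : u = b
    · exact mem_image.mpr ⟨a, mem_erase.mpr ⟨hab, mem_filter.mpr ⟨ha, hxa⟩⟩, hub ▸ hc⟩
    · exact mem_image_of_mem c (mem_erase.mpr ⟨hub, hu⟩)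
  calc #(X.image c) ≤ #(X.erase b) := (card_le_card hsub).trans card_image_le
    _ < #X := card_erase_lt_of_mem hbX
    _ ≤ k := hdeg

variable [Fintype α] {T U : Finset V} {c : V → α}

lemma IsProperOn.exists_update (hc : G.IsProperOn T c)
    (h : #({u ∈ T | G.Adj v u}.image c) < Fintype.card α) :
    ∃ a : α, G.IsProperOn ↑(insert v T) (Function.update c v a) := by
  obtain ⟨a, -, ha⟩ := exists_mem_notMem_of_card_lt_card (t := univ) (by simpa using h)
  have hfree : ∀ w ∈ T, G.Adj v w → a ≠ c w := fun w hw hvw hwa =>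
    ha (mem_image.mpr ⟨w, mem_filter.mpr ⟨hw, hvw⟩, hwa.symm⟩)
  refine ⟨a, fun u hu w hw huw => ?_⟩
  simp only [coe_insert, Set.mem_insert_iff, mem_coe] at hu hw
  rcases eq_or_ne u v with rfl | hu'
  · rw [Function.update_self, Function.update_of_ne huw.ne.symm]
    exact hfree w (hw.resolve_left huw.ne.symm) huw
  rcases eq_or_ne w v with rfl | hw'
  · rw [Function.update_self, Function.update_of_ne hu']
    exact (hfree u (hu.resolve_left hu') huw.symm).symm
  rw [Function.update_of_ne hu', Function.update_of_ne hw']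
  exact hc (hu.resolve_left hu') (hw.resolve_left hw') huw

lemma IsProperOn.exists_extend (hc : G.IsProperOn T c) (hTU : Disjoint T U)
    (hU : ∀ U' ⊆ U, U'.Nonempty → ∃ v ∈ U', #{u ∈ T ∪ U' | G.Adj v u} < Fintype.card α) :
    ∃ c' : V → α, G.IsProperOn ↑(T ∪ U) c' ∧ ∀ u ∈ T, c' u = c u := by
  induction U using Finset.strongInduction with
  | H U ih =>
  rcases U.eq_empty_or_nonempty with rfl | hne
  · exact ⟨c, by simpa using hc, fun _ _ => rfl⟩
  obtain ⟨v, hv, hdeg⟩ := hU U Subset.rfl hne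
  obtain ⟨c', hc', hagree⟩ := ih (U.erase v) (erase_ssubset hv)
    (disjoint_of_subset_right (erase_subset _ _) hTU)
    (fun U' hU' => hU U' (hU'.trans (erase_subset _ _)))
  have hsub : {u ∈ T ∪ U.erase v | G.Adj v u} ⊆ {u ∈ T ∪ U | G.Adj v u} :=
    filter_subset_filter _ (union_subset_union Subset.rfl (erase_subset _ _))
  obtain ⟨a, ha⟩ := hc'.exists_update (card_image_le.trans_lt ((card_le_card hsub).trans_lt hdeg))
  rw [← union_insert, insert_erase hv] at ha
  refine ⟨_, ha, fun u hu => ?_⟩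
  rw [Function.update_of_ne (ne_of_mem_of_not_mem hu (disjoint_right.mp hTU hv)), hagree u hu]

lemma exists_isProperOn_of_card_filter_adj_lt
    (hc : ∃ c : V → α, G.IsProperOn ↑(S.erase v) c) (hv : v ∈ S)
    (hdeg : #{u ∈ S | G.Adj v u} < Fintype.card α) : ∃ c : V → α, G.IsProperOn ↑S c := by
  obtain ⟨c, hc⟩ := hc
  obtain ⟨col, hcol⟩ := hc.exists_update (v := v) <| card_image_le.trans_lt <|
    (card_le_card (filter_subset_filter _ (erase_subset _ _))).trans_lt hdeg
  exact ⟨_, insert_erase hv ▸ hcol⟩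

lemma PreconnectedOn.exists_card_filter_adj_lt {R T U : Finset V} {k : ℕ}
    (hR : G.PreconnectedOn R) (hx : x ∈ R) (hTR : Disjoint T R)
    (hdeg : ∀ v ∈ R, #{u ∈ T ∪ R | G.Adj v u} ≤ k) (hU : U ⊆ R.erase x) (hne : U.Nonempty) :
    ∃ v ∈ U, #{u ∈ T ∪ U | G.Adj v u} < k := by
  obtain ⟨v, hv, hmin⟩ := U.exists_min_image (fun v => (G.restrictTo R).dist v x) hne
  obtain ⟨hvx, hvR⟩ := mem_erase.mp (hU hv)
  obtain ⟨w, hvw, hlt⟩ := (hR v hvR x hx).exists_adj_dist_lt hvx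
  have hUR : T ∪ U ⊆ T ∪ R := union_subset_union Subset.rfl fun u hu => mem_of_mem_erase (hU hu)
  refine ⟨v, hv, lt_of_lt_of_le (card_lt_card ⟨filter_subset_filter _ hUR, fun hsub => ?_⟩)
    (hdeg v hvR)⟩
  obtain ⟨hw, -⟩ := mem_filter.mp (hsub (mem_filter.mpr ⟨mem_union_right _ hvw.2.1, hvw.2.2⟩))
  rcases mem_union.mp hw with hw | hw
  · exact Finset.disjoint_left.mp hTR hw hvw.2.1
  · exact (hmin w hw).not_gt hlt

/-- Colour `a` and `b` alike, then greedily colour `S \ {a, b, x}` in order of decreasing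
distance to `x` inside `S \ {a, b}`: every vertex still has an uncoloured neighbour closer to
`x`. Finally `x` sees at most `|α| - 1` colours, since `a` and `b` share one. -/
lemma exists_isProperOn_of_preconnectedOn_diff_pair
    (hdeg : ∀ v ∈ S, #{u ∈ S | G.Adj v u} ≤ Fintype.card α) (hx : x ∈ S) (ha : a ∈ S)
    (hb : b ∈ S) (hxa : G.Adj x a) (hxb : G.Adj x b) (hab : a ≠ b) (hnab : ¬ G.Adj a b)
    (hconn : G.PreconnectedOn (↑S \ {a, b})) : ∃ c : V → α, G.IsProperOn ↑S c := by
  obtain ⟨col₀⟩ : Nonempty α := Fintype.card_pos_iff.mp <|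
    (card_pos.mpr ⟨a, mem_filter.mpr ⟨ha, hxa⟩⟩).trans_le (hdeg x hx)
  have hc₀ : G.IsProperOn ↑({a, b} : Finset V) fun _ => col₀ := by
    intro u hu w hw huw
    simp only [coe_insert, coe_singleton, Set.mem_insert_iff, Set.mem_singleton_iff] at hu hw
    rcases hu with rfl | rfl <;> rcases hw with rfl | rfl
    exacts [absurd huw (G.loopless.irrefl _), absurd huw hnab, absurd huw.symm hnab,
      absurd huw (G.loopless.irrefl _)]
  have hS : {a, b} ∪ S \ {a, b} = S := union_sdiff_of_subset (insert_subset ha (by simpa))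
  obtain ⟨c, hc, hcab⟩ := hc₀.exists_extend (U := (S \ {a, b}).erase x)
    (disjoint_of_subset_right (erase_subset _ _) disjoint_sdiff) fun U' hU' hne =>
    (PreconnectedOn.exists_card_filter_adj_lt (by simpa using hconn)
      (by simp [hx, hxa.ne, hxb.ne]) disjoint_sdiff
      (fun v hv => by rw [hS]; exact hdeg v (mem_sdiff.mp hv).1) hU' hne)
  have hcov : ({a, b} : Finset V) ∪ (S \ {a, b}).erase x = S.erase x := by
    ext v; by_cases hva : v = a <;> by_cases hvb : v = b <;> simp_all [hxa.ne', hxb.ne']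
  rw [hcov] at hc
  obtain ⟨col, hcol⟩ := hc.exists_update (v := x) <| card_image_filter_adj_lt
    ((card_le_card (filter_subset_filter _ (erase_subset _ _))).trans (hdeg x hx))
    (mem_erase.mpr ⟨hxa.ne', ha⟩) (mem_erase.mpr ⟨hxb.ne', hb⟩) hxa hxb hab
    ((hcab a (by simp)).trans (hcab b (by simp)).symm)
  exact ⟨_, insert_erase hx ▸ hcol⟩

lemma exists_isProperOn_of_regular (hα : 3 ≤ Fintype.card α)
    (hK : G.CliqueFree (Fintype.card α + 1))
    (hreg : ∀ v ∈ S, #{u ∈ S | G.Adj v u} = Fintype.card α)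
    (hconn : ∀ p ∈ S, G.PreconnectedOn (↑S \ {p})) : ∃ c : V → α, G.IsProperOn ↑S c := by
  obtain ⟨col⟩ : Nonempty α := Fintype.card_pos_iff.mp (by omega)
  rcases S.eq_empty_or_nonempty with rfl | ⟨v, hv⟩
  · exact ⟨fun _ => col, fun u hu => by simp at hu⟩
  have hS : Fintype.card α + 1 ≤ #S := by
    have := card_le_card (s := {u ∈ S | G.Adj v u}) (t := S.erase v) fun u hu =>
      mem_erase.mpr ⟨(mem_filter.mp hu).2.ne', (mem_filter.mp hu).1⟩
    have := card_erase_add_one hv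
    have := hreg v hv
    omega
  have hSconn : G.PreconnectedOn S := fun u hu w hw => by
    obtain ⟨p, hp⟩ : ((S.erase u).erase w).Nonempty := by
      rw [← card_pos]
      have := pred_card_le_card_erase (s := S.erase u) (a := w)
      have := card_erase_of_mem (s := S) hu
      omega
    obtain ⟨hpw, hpu, hpS⟩ : p ≠ w ∧ p ≠ u ∧ p ∈ S := by simpa using hp
    exact (hconn p hpS u (by simpa using ⟨hu, hpu.symm⟩) w (by simpa using ⟨hw, hpw.symm⟩)).mono
      (restrictTo_mono Set.sdiff_subset)
  obtain ⟨u, hu, w, hw, huw, hnadj⟩ : ∃ u ∈ S, ∃ w ∈ S, u ≠ w ∧ ¬ G.Adj u w := by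
    by_contra! hclique
    have hSK : G.IsClique (S : Set V) := fun u hu w hw huw => hclique u hu w hw huw
    refine hK S ⟨hSK, ?_⟩
    rw [← hreg v hv, hSK.filter_adj_eq_erase hv, card_erase_add_one hv]
  obtain ⟨x, a, b, hx, ha, hb, hxa, hxb, hab, hnab, habconn⟩ :=
    exists_adj_adj_not_adj_preconnectedOn_diff (fun v hv => hreg v hv ▸ hα) hconn
      (hSconn.exists_adj_adj_not_adj hu hw huw hnadj)
  exact exists_isProperOn_of_preconnectedOn_diff_pair (fun v hv => (hreg v hv).le) hx ha hb hxa
    hxb hab hnab habconn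

theorem brooks (hα : 3 ≤ Fintype.card α) (hK : G.CliqueFree (Fintype.card α + 1))
    (S : Finset V) (hdeg : ∀ v ∈ S, #{u ∈ S | G.Adj v u} ≤ Fintype.card α) :
    ∃ c : V → α, G.IsProperOn ↑S c := by
  induction S using Finset.strongInduction with
  | H S ih =>
  have hsub : ∀ T ⊂ S, ∃ c : V → α, G.IsProperOn ↑T c := fun T hT => ih T hT fun v hv =>
    (card_le_card (filter_subset_filter _ hT.subset)).trans (hdeg v (hT.subset hv))
  by_cases hlow : ∃ v ∈ S, #{u ∈ S | G.Adj v u} < Fintype.card α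
  · obtain ⟨v, hv, hvdeg⟩ := hlow
    exact exists_isProperOn_of_card_filter_adj_lt (hsub _ (erase_ssubset hv)) hv hvdeg
  by_cases hcut : ∃ p ∈ S, ¬ G.PreconnectedOn (↑S \ {p})
  · obtain ⟨p, hp, hnconn⟩ := hcut
    obtain ⟨D, hD⟩ := exists_isFragment_of_not_preconnectedOn (P := S \ {p}) (by simpa using hnconn)
    exact exists_isProperOn_of_isFragment hsub hp (by simpa using hD)
  push Not at hlow hcut
  exact exists_isProperOn_of_regular hα hK (fun v hv => (hdeg v hv).antisymm (hlow v hv)) hcut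

/-- Brooks' theorem applies to a minimal non-colourable set: its minimum degree is at least
`|α|`, so the average degree bound makes it `|α|`-regular. -/
theorem exists_isProperOn_of_sum_card_filter_adj_le (hα : 3 ≤ Fintype.card α)
    (hK : G.CliqueFree (Fintype.card α + 1))
    (hsum : ∀ S : Finset V, ∑ v ∈ S, #{u ∈ S | G.Adj v u} ≤ Fintype.card α * #S)
    (S : Finset V) : ∃ c : V → α, G.IsProperOn ↑S c := by
  induction S using Finset.strongInduction with
  | H S ih =>
  by_cases hlow : ∃ v ∈ S, #{u ∈ S | G.Adj v u} < Fintype.card α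
  · obtain ⟨v, hv, hvdeg⟩ := hlow
    exact exists_isProperOn_of_card_filter_adj_lt (ih _ (erase_ssubset hv)) hv hvdeg
  push Not at hlow
  have hconst : ∑ _v ∈ S, Fintype.card α = Fintype.card α * #S := by simp [mul_comm]
  have hreg := (sum_eq_sum_iff_of_le hlow).mp <|
    hconst.trans ((hsum S).antisymm (hconst ▸ sum_le_sum hlow)).symm
  exact brooks hα hK S fun v hv => (hreg v hv).ge

end Coloring

end SimpleGraph

open SimpleGraph

section Oriented

open scoped Classical

variable {V : Type*} {A : V → V → Prop}

lemma not_underlying_adj_of_rel_of_rel (hTT3 : ¬ ∃ u v w : V, A u v ∧ A v w ∧ A u w) {x y z : V}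
    (hy : A x y) (hz : A x z) : ¬ (underlying A).Adj y z := by
  rintro ⟨-, hyz | hzy⟩
  exacts [hTT3 ⟨x, y, z, hy, hyz, hz⟩, hTT3 ⟨x, z, y, hz, hzy, hy⟩]

lemma card_filter_underlying_adj (hasym : ∀ x y, A x y → ¬ A y x) (S : Finset V) (v : V) :
    #{u ∈ S | (underlying A).Adj v u} = #{u ∈ S | A v u} + #{u ∈ S | A u v} := by
  rw [← card_union_of_disjoint (disjoint_filter.mpr fun u _ h h' => hasym v u h h'), ← filter_or]
  congr 1
  ext u
  rw [mem_filter, mem_filter]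
  refine ⟨fun h => ⟨h.1, h.2.2⟩, fun h => ⟨h.1, ?_, h.2⟩⟩
  rintro rfl
  rcases h.2 with h | h <;> exact hasym v v h h

lemma sum_card_filter_underlying_adj (hasym : ∀ x y, A x y → ¬ A y x) (S : Finset V) :
    ∑ v ∈ S, #{u ∈ S | (underlying A).Adj v u} = 2 * ∑ v ∈ S, #{u ∈ S | A v u} := by
  simp_rw [card_filter_underlying_adj hasym, sum_add_distrib]
  have := sum_card_bipartiteAbove_eq_sum_card_bipartiteBelow (s := S) (t := S) (r := A)
  simp only [bipartiteAbove, bipartiteBelow] at this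
  omega

lemma card_filter_rel_le (hTT3 : ¬ ∃ u v w : V, A u v ∧ A v w ∧ A u w) {ℓ : ℕ}
    (hS0l : ¬ ∃ (x : V) (s : Finset V), s.card = ℓ ∧ (∀ y ∈ s, A x y) ∧
      (∀ y ∈ s, ∀ z ∈ s, y ≠ z → ¬ (underlying A).Adj y z))
    (S : Finset V) (v : V) : #{u ∈ S | A v u} ≤ ℓ - 1 := by
  by_contra! h
  obtain ⟨s, hs, hcard⟩ := exists_subset_card_eq (s := {u ∈ S | A v u}) (n := ℓ) (by omega)
  have hout : ∀ y ∈ s, A v y := fun y hy => (mem_filter.mp (hs hy)).2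
  exact hS0l ⟨v, s, hcard, hout, fun y hy z hz _ =>
    not_underlying_adj_of_rel_of_rel hTT3 (hout y hy) (hout z hz)⟩

/-- In a `4`-clique the degrees sum to `12`, but each vertex has at most one out-neighbour. -/
lemma cliqueFree_four_underlying (hasym : ∀ x y, A x y → ¬ A y x)
    (hTT3 : ¬ ∃ u v w : V, A u v ∧ A v w ∧ A u w) : (underlying A).CliqueFree 4 := by
  intro K hK
  have hdeg : ∀ v ∈ K, #{u ∈ K | (underlying A).Adj v u} = 3 := fun v hv => by
    rw [hK.1.filter_adj_eq_erase hv, card_erase_of_mem hv, hK.2]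
  have hout : ∀ v ∈ K, #{u ∈ K | A v u} ≤ 1 := fun v _ => card_le_one.mpr fun y hy z hz => by
    by_contra hyz
    exact not_underlying_adj_of_rel_of_rel hTT3 (mem_filter.mp hy).2 (mem_filter.mp hz).2
      (hK.1 (mem_filter.mp hy).1 (mem_filter.mp hz).1 hyz)
  have := sum_card_filter_underlying_adj hasym K
  rw [sum_congr rfl hdeg, sum_const, hK.2, smul_eq_mul] at this
  have := sum_le_sum hout
  simp only [sum_const, hK.2, smul_eq_mul] at this
  omega

end Oriented

theorem stmt5 {V : Type*} [Fintype V] (ℓ : ℕ) (hl : 3 ≤ ℓ)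
    (A : V → V → Prop) (hasym : ∀ x y, A x y → ¬ A y x)
    (hTT3 : ¬ ∃ u v w : V, A u v ∧ A v w ∧ A u w)
    (hS0l : ¬ ∃ (x : V) (s : Finset V), s.card = ℓ ∧ (∀ y ∈ s, A x y) ∧
      (∀ y ∈ s, ∀ z ∈ s, y ≠ z → ¬ (underlying A).Adj y z)) :
    (underlying A).chromaticNumber ≤ ((2 * ℓ - 2 : ℕ) : ℕ∞) := by
  classical
  have hsum : ∀ S : Finset V, ∑ v ∈ S, #{u ∈ S | (underlying A).Adj v u} ≤
      Fintype.card (Fin (2 * ℓ - 2)) * #S := fun S => by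
    rw [sum_card_filter_underlying_adj hasym, Fintype.card_fin]
    calc 2 * ∑ v ∈ S, #{u ∈ S | A v u} ≤ 2 * ∑ _v ∈ S, (ℓ - 1) := by
          gcongr with v; exact card_filter_rel_le hTT3 hS0l S v
      _ = (2 * ℓ - 2) * #S := by
          rw [sum_const, smul_eq_mul, show 2 * ℓ - 2 = 2 * (ℓ - 1) by omega]
          ring
  obtain ⟨c, hc⟩ := exists_isProperOn_of_sum_card_filter_adj_le (by simp; omega)
    ((cliqueFree_four_underlying hasym hTT3).mono (by simp; omega)) hsum univ
  have hcol := (Coloring.mk c fun h => hc (mem_univ _) (mem_univ _) h).colorable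
  simpa using hcol.chromaticNumber_le
end

section
/- Let D be a connected oriented graph with no induced TT3, no directed triangle, and no induced S_{1,1} (a directed path on 3 vertices whose endpoints are non-adjacent). Then every vertex of D is a source or a sink; consequently D is an extension of TT2, i.e., the underlying graph of D is bipartite with all arcs oriented from sources to sinks, and χ(D) ≤ 2. -/
section

variable {V : Type*} {A : V → V → Prop}

theorem not_arc_arc_of_forbidden (hTT3 : ¬ ∃ u v w : V, A u v ∧ A v w ∧ A u w)
    (hC3 : ¬ ∃ u v w : V, A u v ∧ A v w ∧ A w u)
    (hS11 : ¬ ∃ a b c : V, A a b ∧ A b c ∧ ¬ (underlying A).Adj a c)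
    (a b c : V) (hab : A a b) (hbc : A b c) : False := by
  by_cases hac : (underlying A).Adj a c
  · rcases hac.2 with hac | hca
    · exact hTT3 ⟨a, b, c, hab, hbc, hac⟩
    · exact hC3 ⟨a, b, c, hab, hbc, hca⟩
  · exact hS11 ⟨a, b, c, hab, hbc, hac⟩

variable (hpath : ∀ a b c : V, A a b → A b c → False)
include hpath

theorem no_in_arc_or_no_out_arc_of_not_arc_arc (v : V) :
    (∀ u, ¬ A u v) ∨ (∀ u, ¬ A v u) := by
  by_cases hout : ∃ w, A v w
  · obtain ⟨w, hvw⟩ := hout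
    exact Or.inl fun u huv => hpath u v w huv hvw
  · exact Or.inr fun u hvu => hout ⟨u, hvu⟩

theorem arc_leaves_setOf_exists_arc_of_not_arc_arc {x y : V} (hxy : A x y) :
    x ∈ {v | ∃ w, A v w} ∧ y ∉ {v | ∃ w, A v w} :=
  ⟨⟨y, hxy⟩, fun ⟨z, hyz⟩ => hpath x y z hxy hyz⟩

end

theorem underlying_colorable_two_of_arcs_leave {V : Type*} {A : V → V → Prop} (S : Set V)
    (hS : ∀ x y, A x y → x ∈ S ∧ y ∉ S) : (underlying A).Colorable 2 := by
  classical
  refine ⟨⟨fun v => if v ∈ S then 0 else 1, ?_⟩⟩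
  rintro x y ⟨-, hxy | hyx⟩
  · simp [(hS x y hxy).1, (hS x y hxy).2]
  · simp [(hS y x hyx).1, (hS y x hyx).2]

theorem stmt6_general {V : Type*} (A : V → V → Prop)
    (hTT3 : ¬ ∃ u v w : V, A u v ∧ A v w ∧ A u w)
    (hC3 : ¬ ∃ u v w : V, A u v ∧ A v w ∧ A w u)
    (hS11 : ¬ ∃ a b c : V, A a b ∧ A b c ∧ ¬ (underlying A).Adj a c) :
    (∀ v : V, (∀ u, ¬ A u v) ∨ (∀ u, ¬ A v u)) ∧
    (∃ S : Set V, ∀ x y, A x y → x ∈ S ∧ y ∉ S) ∧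
    (underlying A).chromaticNumber ≤ 2 := by
  have hpath := not_arc_arc_of_forbidden hTT3 hC3 hS11
  have hS : ∀ x y, A x y → x ∈ {v | ∃ w, A v w} ∧ y ∉ {v | ∃ w, A v w} :=
    fun _ _ => arc_leaves_setOf_exists_arc_of_not_arc_arc hpath
  exact ⟨no_in_arc_or_no_out_arc_of_not_arc_arc hpath, ⟨_, hS⟩,
    (underlying_colorable_two_of_arcs_leave _ hS).chromaticNumber_le⟩

theorem stmt6 {V : Type*} [Fintype V] (A : V → V → Prop)
    (hasym : ∀ x y, A x y → ¬ A y x)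
    (hconn : (underlying A).Connected)
    (hTT3 : ¬ ∃ u v w : V, A u v ∧ A v w ∧ A u w)
    (hC3 : ¬ ∃ u v w : V, A u v ∧ A v w ∧ A w u)
    (hS11 : ¬ ∃ a b c : V, A a b ∧ A b c ∧ ¬ (underlying A).Adj a c) :
    (∀ v : V, (∀ u, ¬ A u v) ∨ (∀ u, ¬ A v u)) ∧
    (∃ S : Set V, ∀ x y, A x y → x ∈ S ∧ y ∉ S) ∧
    (underlying A).chromaticNumber ≤ 2 :=
  stmt6_general A hTT3 hC3 hS11
end

section
/- Let k, ℓ ≥ 1. Every oriented graph with no directed triangle, no TT3, and no induced S_{k,ℓ} has chromatic number at most 2k + 2ℓ - 2. -/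
/-!
With neither a directed triangle nor a TT3, the neighbourhood of every vertex is independent, so
a vertex with `k` in-neighbours and `ℓ` out-neighbours would be the centre of an induced
`S_{k,ℓ}`. Hence every vertex has in-degree `< k` or out-degree `< ℓ`. In any vertex set the
number of arcs is the sum of the in-degrees, so on the vertices of in-degree `< k` the underlying
graph is `2(k-1)`-degenerate, hence `(2k-1)`-colourable; symmetrically the remaining vertices are
`(2ℓ-1)`-colourable.
-/

open Finset

lemma Finset.card_filter_subtype_le {V : Type*} [Fintype V] (p : V → Prop) [DecidablePred p]
    (s : Set V) [Fintype s] : #{u : s | p u} ≤ #{u | p u} :=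
  card_le_card_of_injOn Subtype.val (fun u hu => by simpa using hu) Subtype.val_injective.injOn

namespace SimpleGraph

variable {V : Type*} {G : SimpleGraph V}

lemma Colorable.of_induce_compl {s : Set V} {m n : ℕ} (hs : (G.induce s).Colorable m)
    (hsc : (G.induce sᶜ).Colorable n) : G.Colorable (m + n) := by
  classical
  obtain ⟨C₁⟩ := hs
  obtain ⟨C₂⟩ := hsc
  let c : V → Fin m ⊕ Fin n := fun v =>
    if hv : v ∈ s then .inl (C₁ ⟨v, hv⟩) else .inr (C₂ ⟨v, hv⟩)
  have hc : ∀ {x y : V}, G.Adj x y → c x ≠ c y := by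
    intro x y hxy
    by_cases hx : x ∈ s <;> by_cases hy : y ∈ s <;> simp only [c, hx, hy, dite_true, dite_false,
      ne_eq, reduceCtorEq, not_false_eq_true, Sum.inl.injEq, Sum.inr.injEq]
    · exact C₁.valid (induce_adj.2 hxy)
    · exact C₂.valid (induce_adj.2 hxy)
  simpa using (Coloring.mk c hc).colorable

section Degenerate

variable (G) [DecidableRel G.Adj]

def IsDegenerate (d : ℕ) : Prop :=
  ∀ t : Finset V, t.Nonempty → ∃ v ∈ t, #{u ∈ t | G.Adj v u} ≤ d

variable {G}

lemma IsDegenerate.exists_coloring_on [DecidableEq V] {d : ℕ} (hG : G.IsDegenerate d)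
    (s : Finset V) : ∃ c : V → Fin (d + 1), ∀ x ∈ s, ∀ y ∈ s, G.Adj x y → c x ≠ c y := by
  induction s using Finset.strongInduction with
  | _ s ih =>
    rcases s.eq_empty_or_nonempty with rfl | hs
    · exact ⟨0, by simp⟩
    obtain ⟨v, hv, hdeg⟩ := hG s hs
    obtain ⟨c, hc⟩ := ih (s.erase v) (erase_ssubset hv)
    have hfew : #(image c {u ∈ s.erase v | G.Adj v u}) < #(univ : Finset (Fin (d + 1))) := by
      calc #(image c {u ∈ s.erase v | G.Adj v u})
          ≤ #{u ∈ s | G.Adj v u} := card_image_le.trans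
            (card_le_card (filter_subset_filter _ (erase_subset _ _)))
        _ < d + 1 := Nat.lt_succ_of_le hdeg
        _ = _ := by simp
    obtain ⟨n, -, hn⟩ := exists_mem_notMem_of_card_lt_card hfew
    have hnew : ∀ y ∈ s, G.Adj v y → Function.update c v n y ≠ n := by
      intro y hy hvy
      rw [Function.update_of_ne hvy.ne']
      exact fun hcy => hn (mem_image.2 ⟨y, by simp [hy, hvy, hvy.ne'], hcy⟩)
    refine ⟨Function.update c v n, fun x hx y hy hxy => ?_⟩
    obtain rfl | hxv := eq_or_ne x v
    · simpa using (hnew y hy hxy).symm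
    obtain rfl | hyv := eq_or_ne y v
    · simpa using hnew x hx hxy.symm
    rw [Function.update_of_ne hxv, Function.update_of_ne hyv]
    exact hc x (mem_erase.2 ⟨hxv, hx⟩) y (mem_erase.2 ⟨hyv, hy⟩) hxy

lemma IsDegenerate.colorable [Fintype V] {d : ℕ} (hG : G.IsDegenerate d) :
    G.Colorable (d + 1) := by
  classical
  obtain ⟨c, hc⟩ := hG.exists_coloring_on univ
  exact ⟨Coloring.mk c fun hxy => hc _ (mem_univ _) _ (mem_univ _) hxy⟩

end Degenerate

end SimpleGraph

section Digraph

variable {V : Type*} (A : V → V → Prop)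

lemma underlying_flip : underlying (flip A) = underlying A := by
  ext x y
  simp only [underlying, flip, or_comm]

lemma underlying_restrict (s : Set V) :
    underlying (fun x y : s => A x y) = (underlying A).induce s := by
  ext x y
  simp [underlying, Subtype.coe_ne_coe]

variable {A}

lemma exists_degree_le_two_mul_of_inDegree_le [DecidableRel A] [DecidableRel (underlying A).Adj]
    {t : Finset V} (ht : t.Nonempty) {d : ℕ} (h : ∀ v ∈ t, #{u ∈ t | A u v} ≤ d) :
    ∃ v ∈ t, #{u ∈ t | (underlying A).Adj v u} ≤ 2 * d := by
  classical
  refine exists_le_of_sum_le ht ?_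
  calc ∑ v ∈ t, #{u ∈ t | (underlying A).Adj v u}
      ≤ ∑ v ∈ t, (#{u ∈ t | A v u} + #{u ∈ t | A u v}) := by
        refine sum_le_sum fun v _ => (card_le_card fun u hu => ?_).trans (card_union_le _ _)
        rw [mem_filter] at hu
        simp only [underlying, mem_union, mem_filter] at hu ⊢
        tauto
    _ = ∑ v ∈ t, #{u ∈ t | A u v} + ∑ v ∈ t, #{u ∈ t | A u v} := by
        rw [sum_add_distrib]
        congr 1
        exact sum_card_bipartiteAbove_eq_sum_card_bipartiteBelow A
    _ ≤ ∑ _v ∈ t, d + ∑ _v ∈ t, d := by gcongr <;> exact h _ ‹_›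
    _ = ∑ _v ∈ t, 2 * d := by rw [← sum_add_distrib, two_mul]

lemma isDegenerate_underlying_of_inDegree_le [Fintype V] [DecidableRel A]
    [DecidableRel (underlying A).Adj] {d : ℕ} (h : ∀ v, #{u | A u v} ≤ d) :
    (underlying A).IsDegenerate (2 * d) := fun t ht =>
  exists_degree_le_two_mul_of_inDegree_le ht fun v _ =>
    (card_le_card (filter_subset_filter _ (subset_univ t))).trans (h v)

lemma colorable_underlying_of_inDegree_le [Fintype V] [DecidableRel A] {d : ℕ}
    (h : ∀ v, #{u | A u v} ≤ d) : (underlying A).Colorable (2 * d + 1) := by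
  classical
  exact (isDegenerate_underlying_of_inDegree_le h).colorable

lemma colorable_underlying_of_outDegree_le [Fintype V] [DecidableRel A] {d : ℕ}
    (h : ∀ v, #{u | A v u} ≤ d) : (underlying A).Colorable (2 * d + 1) := by
  let : DecidableRel (flip A) := fun x y => ‹DecidableRel A› y x
  rw [← underlying_flip]
  exact colorable_underlying_of_inDegree_le h

end Digraph

section TriangleFree

variable {V : Type*} {A : V → V → Prop}

lemma not_adj_of_common_nbr (hC3 : ¬ ∃ u v w : V, A u v ∧ A v w ∧ A w u)
    (hTT3 : ¬ ∃ u v w : V, A u v ∧ A v w ∧ A u w) {x y z : V}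
    (hy : A y x ∨ A x y) (hz : A z x ∨ A x z) : ¬ (underlying A).Adj y z := by
  rintro ⟨-, hyz | hzy⟩ <;> grind

lemma inDegree_lt_or_outDegree_lt [Fintype V] [DecidableEq V] [DecidableRel A] {k ℓ : ℕ}
    (hC3 : ¬ ∃ u v w : V, A u v ∧ A v w ∧ A w u)
    (hTT3 : ¬ ∃ u v w : V, A u v ∧ A v w ∧ A u w)
    (hSkl : ¬ ∃ (x : V) (s t : Finset V), s.card = k ∧ t.card = ℓ ∧
      (∀ y ∈ s, A y x) ∧ (∀ y ∈ t, A x y) ∧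
      (∀ y ∈ s ∪ t, ∀ z ∈ s ∪ t, y ≠ z → ¬ (underlying A).Adj y z)) (v : V) :
    #{u | A u v} < k ∨ #{u | A v u} < ℓ := by
  by_contra! hbig
  obtain ⟨s, hs, rfl⟩ := exists_subset_card_eq hbig.1
  obtain ⟨t, ht, rfl⟩ := exists_subset_card_eq hbig.2
  have hin : ∀ y ∈ s, A y v := fun y hy => (mem_filter.1 (hs hy)).2
  have hout : ∀ y ∈ t, A v y := fun y hy => (mem_filter.1 (ht hy)).2
  have hnbr : ∀ y ∈ s ∪ t, A y v ∨ A v y := fun y hy =>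
    (mem_union.1 hy).imp (hin y) (hout y)
  exact hSkl ⟨v, s, t, rfl, rfl, hin, hout, fun y hy z hz _ =>
    not_adj_of_common_nbr hC3 hTT3 (hnbr y hy) (hnbr z hz)⟩

end TriangleFree

theorem stmt7_general {V : Type*} [Fintype V] [DecidableEq V] (k ℓ : ℕ)
    (hk : 1 ≤ k) (hl : 1 ≤ ℓ)
    (A : V → V → Prop)
    (hC3 : ¬ ∃ u v w : V, A u v ∧ A v w ∧ A w u)
    (hTT3 : ¬ ∃ u v w : V, A u v ∧ A v w ∧ A u w)
    (hSkl : ¬ ∃ (x : V) (s t : Finset V), s.card = k ∧ t.card = ℓ ∧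
      (∀ y ∈ s, A y x) ∧ (∀ y ∈ t, A x y) ∧
      (∀ y ∈ s ∪ t, ∀ z ∈ s ∪ t, y ≠ z → ¬ (underlying A).Adj y z)) :
    (underlying A).chromaticNumber ≤ ((2 * k + 2 * ℓ - 2 : ℕ) : ℕ∞) := by
  classical
  set S : Set V := {v | #{u | A u v} < k}
  have hS : ((underlying A).induce S).Colorable (2 * (k - 1) + 1) := by
    rw [← underlying_restrict]
    exact colorable_underlying_of_inDegree_le fun v =>
      (card_filter_subtype_le (A · v) S).trans (Nat.le_sub_one_of_lt v.2)
  have hSc : ((underlying A).induce Sᶜ).Colorable (2 * (ℓ - 1) + 1) := by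
    rw [← underlying_restrict]
    refine colorable_underlying_of_outDegree_le fun v => ?_
    have hv : #{u | A v u} < ℓ :=
      (inDegree_lt_or_outDegree_lt hC3 hTT3 hSkl v).resolve_left v.2
    exact (card_filter_subtype_le (A v ·) Sᶜ).trans (Nat.le_sub_one_of_lt hv)
  exact ((hS.of_induce_compl hSc).mono (by omega)).chromaticNumber_le

theorem stmt7 {V : Type*} [Fintype V] [DecidableEq V] (k ℓ : ℕ)
    (hk : 1 ≤ k) (hl : 1 ≤ ℓ)
    (A : V → V → Prop) (hasym : ∀ x y, A x y → ¬ A y x)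
    (hC3 : ¬ ∃ u v w : V, A u v ∧ A v w ∧ A w u)
    (hTT3 : ¬ ∃ u v w : V, A u v ∧ A v w ∧ A u w)
    (hSkl : ¬ ∃ (x : V) (s t : Finset V), s.card = k ∧ t.card = ℓ ∧
      (∀ y ∈ s, A y x) ∧ (∀ y ∈ t, A x y) ∧
      (∀ y ∈ s ∪ t, ∀ z ∈ s ∪ t, y ≠ z → ¬ (underlying A).Adj y z)) :
    (underlying A).chromaticNumber ≤ ((2 * k + 2 * ℓ - 2 : ℕ) : ℕ∞) :=
  stmt7_general k ℓ hk hl A hC3 hTT3 hSkl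
end

section
/- Let k ≥ 1 and let 0 < p < 1. There exists N such that: if H = (V, E) is a hypergraph with |V| ≥ N, every hyperedge of H has size at least p|V|, and the intersection of any k distinct hyperedges has size at most k-1, then |E| < k / p^k. -/
/-!
Double count the pairs `(T, e)` of a `k`-set of vertices `T` and an edge `e ⊇ T`. Every edge
contains at least `C(pn, k)` such `T`, while every `T` lies in at most `k - 1` edges, since `k` edges
through `T` would meet in at least `k` vertices. Hence `|E| · C(pn, k) ≤ (k - 1) · C(n, k)`, whence
`|E| · (pn - k + 1)^k ≤ (k - 1) · n^k`, and as `n → ∞` the ratio `(pn - k + 1)^k / (pn)^k` tends to `1`,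
which beats the factor `(k - 1) / k`.
-/

open Filter Finset

namespace Hypergraph

variable {α : Type*} [Fintype α] [DecidableEq α] {E : Finset (Finset α)} {k : ℕ}

lemma card_filter_superset_lt (hE : ∀ S ⊆ E, #S = k → #(S.inf id) < k) {T : Finset α}
    (hT : #T = k) : #{e ∈ E | T ⊆ e} < k := by
  by_contra! hmany
  obtain ⟨S, hSE, hS⟩ := exists_subset_card_eq hmany
  have hTS : T ⊆ S.inf id := Finset.le_inf fun e he => (mem_filter.1 (hSE he)).2
  have := card_le_card hTS
  have := hE S (hSE.trans (filter_subset _ _)) hS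
  omega

lemma card_mul_choose_le {m : ℕ} (hm : ∀ e ∈ E, m ≤ #e)
    (hE : ∀ S ⊆ E, #S = k → #(S.inf id) < k) :
    #E * m.choose k ≤ (k - 1) * (Fintype.card α).choose k := by
  have hcount := card_mul_le_card_mul (fun e T => T ⊆ e) (s := E)
    (t := powersetCard k univ) (m := m.choose k) (n := k - 1)
    (fun e he => ?_) (fun T hT => ?_)
  · rwa [card_powersetCard, card_univ, mul_comm _ (k - 1)] at hcount
  · have hsub : bipartiteAbove (fun e T => T ⊆ e) (powersetCard k univ) e = powersetCard k e := by
      ext T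
      simp [bipartiteAbove, mem_powersetCard, and_comm]
    rw [hsub, card_powersetCard]
    exact Nat.choose_le_choose k (hm e he)
  · exact Nat.le_sub_one_of_lt (card_filter_superset_lt hE (mem_powersetCard.1 hT).2)

lemma card_mul_pow_le {m : ℕ} (hm : ∀ e ∈ E, m ≤ #e)
    (hE : ∀ S ⊆ E, #S = k → #(S.inf id) < k) :
    #E * (m + 1 - k) ^ k ≤ (k - 1) * Fintype.card α ^ k := by
  have hchoose := card_mul_choose_le hm hE
  calc #E * (m + 1 - k) ^ k ≤ #E * m.descFactorial k := by
        gcongr; exact Nat.pow_sub_le_descFactorial m k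
    _ = k.factorial * (#E * m.choose k) := by
        rw [Nat.descFactorial_eq_factorial_mul_choose]; ring
    _ ≤ k.factorial * ((k - 1) * (Fintype.card α).choose k) := by gcongr
    _ = (k - 1) * (Fintype.card α).descFactorial k := by
        rw [Nat.descFactorial_eq_factorial_mul_choose]; ring
    _ ≤ (k - 1) * Fintype.card α ^ k := by gcongr; exact Nat.descFactorial_le_pow _ k

lemma card_mul_sub_pow_le {x : ℝ} (hx : ∀ e ∈ E, x ≤ #e)
    (hE : ∀ S ⊆ E, #S = k → #(S.inf id) < k) (hxk : (k : ℝ) - 1 ≤ x) :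
    (#E : ℝ) * (x - (k - 1)) ^ k ≤ ((k - 1 : ℕ) : ℝ) * (Fintype.card α : ℝ) ^ k := by
  have hceil : ∀ e ∈ E, ⌈x⌉₊ ≤ #e := fun e he => Nat.ceil_le.2 (hx e he)
  have hk : k ≤ ⌈x⌉₊ + 1 := by
    have : (k : ℝ) ≤ ⌈x⌉₊ + 1 := by linarith [Nat.le_ceil x]
    exact_mod_cast this
  have hbase : x - (k - 1) ≤ ((⌈x⌉₊ + 1 - k : ℕ) : ℝ) := by
    push_cast [hk]
    linarith [Nat.le_ceil x]
  calc (#E : ℝ) * (x - (k - 1)) ^ k ≤ #E * ((⌈x⌉₊ + 1 - k : ℕ) : ℝ) ^ k := by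
        gcongr
    _ ≤ ((k - 1 : ℕ) : ℝ) * (Fintype.card α : ℝ) ^ k := by
        exact_mod_cast card_mul_pow_le hceil hE

end Hypergraph

lemma eventually_mul_pow_lt_mul_sub_pow {a b : ℝ} (hab : a < b) (c : ℝ) (k : ℕ) :
    ∀ᶠ x : ℝ in atTop, a * x ^ k < b * (x - c) ^ k := by
  have hlim : Tendsto (fun x : ℝ => b * (1 - c * x⁻¹) ^ k) atTop (nhds b) := by
    simpa using ((tendsto_inv_atTop_zero.const_mul c).const_sub 1).pow k |>.const_mul b
  filter_upwards [hlim.eventually (lt_mem_nhds hab), eventually_gt_atTop 0] with x hx hx0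
  have hfactor : b * (x - c) ^ k = b * (1 - c * x⁻¹) ^ k * x ^ k := by
    rw [mul_assoc, ← mul_pow]; congr 2; field_simp
  rw [hfactor]
  exact mul_lt_mul_of_pos_right hx (pow_pos hx0 k)

theorem stmt8_general (k : ℕ) (hk : 1 ≤ k) (p : ℝ) (hp0 : 0 < p) :
    ∃ N : ℕ, ∀ n : ℕ, N ≤ n → ∀ E : Finset (Finset (Fin n)),
      (∀ e ∈ E, p * n ≤ (e.card : ℝ)) →
      (∀ S : Finset (Finset (Fin n)), S ⊆ E → S.card = k →
        ((S.inf id).card ≤ k - 1)) →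
      (E.card : ℝ) < k / p ^ k := by
  have hk' : ((k - 1 : ℕ) : ℝ) = k - 1 := by push_cast [hk]; ring
  have hlt : ((k - 1 : ℕ) : ℝ) < k := by rw [hk']; linarith
  obtain ⟨N, hN⟩ := eventually_atTop.1 <|
    (tendsto_natCast_atTop_atTop.const_mul_atTop hp0).eventually <|
      (eventually_mul_pow_lt_mul_sub_pow hlt ((k : ℝ) - 1) k).and
        (eventually_gt_atTop ((k : ℝ) - 1))
  refine ⟨N, fun n hn E hsize hint => ?_⟩
  obtain ⟨hgrow, hpos⟩ := hN n hn
  have hcount := Hypergraph.card_mul_sub_pow_le hsize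
    (fun S hS hSk => Nat.lt_of_le_pred hk (hint S hS hSk)) hpos.le
  rw [Fintype.card_fin] at hcount
  have hpow : 0 < (p * n - (k - 1)) ^ k := pow_pos (by linarith) k
  rw [lt_div_iff₀ (pow_pos hp0 k)]
  refine lt_of_mul_lt_mul_right ?_ hpow.le
  calc (E.card : ℝ) * p ^ k * (p * n - (k - 1)) ^ k
      = (E.card * (p * n - (k - 1)) ^ k) * p ^ k := by ring
    _ ≤ ((k - 1 : ℕ) : ℝ) * (n : ℝ) ^ k * p ^ k := by gcongr
    _ = ((k - 1 : ℕ) : ℝ) * (p * n) ^ k := by ring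
    _ < k * (p * n - (k - 1)) ^ k := hgrow

/-- The combinatorial hypergraph lemma: for `k ≥ 1` and `0 < p < 1` there is a
threshold `N` such that any hypergraph on `n ≥ N` vertices whose hyperedges all
have size at least `p·n`, and in which any `k` distinct hyperedges intersect in
at most `k - 1` vertices, has fewer than `k / p^k` hyperedges. -/
theorem stmt8 (k : ℕ) (hk : 1 ≤ k) (p : ℝ) (hp0 : 0 < p) (hp1 : p < 1) :
    ∃ N : ℕ, ∀ n : ℕ, N ≤ n → ∀ E : Finset (Finset (Fin n)),
      (∀ e ∈ E, p * n ≤ (e.card : ℝ)) →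
      (∀ S : Finset (Finset (Fin n)), S ⊆ E → S.card = k →
        ((S.inf id).card ≤ k - 1)) →
      (E.card : ℝ) < k / p ^ k :=
  stmt8_general k hk p hp0
end

section
/- Let D be an oriented graph with no TT3, and suppose D is c-triangle-free-critical, meaning that the minimum number of colours in a vertex-colouring of D with no monochromatic directed triangle equals c, but for every vertex x this quantity for D - x is less than c. Then every vertex of D has out-degree at least c-1 and in-degree at least c-1. -/
/-- `A` admits a colouring with `c` colours in which no directed triangle is
monochromatic. -/
def TriFreeColorable {V : Type*} (A : V → V → Prop) (c : ℕ) : Prop :=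
  ∃ f : V → Fin c, ∀ u v w : V, A u v → A v w → A w u →
    ¬ (f u = f v ∧ f v = f w)

/-- The triangle-free chromatic number of a digraph. -/
noncomputable def triChrom {V : Type*} (A : V → V → Prop) : ℕ :=
  sInf {c : ℕ | TriFreeColorable A c}

lemma triFree_mono {V : Type*} {A : V → V → Prop} {d e : ℕ}
    (h : TriFreeColorable A d) (hde : d ≤ e) : TriFreeColorable A e := by
  obtain ⟨f, hf⟩ := h
  refine ⟨fun v => Fin.castLE hde (f v), fun u v w h1 h2 h3 hm => ?_⟩
  exact hf u v w h1 h2 h3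
    ⟨Fin.castLE_injective hde hm.1, Fin.castLE_injective hde hm.2⟩

lemma triFree_top {V : Type*} [Fintype V] {A : V → V → Prop}
    (hasym : ∀ x y, A x y → ¬ A y x) :
    TriFreeColorable A (Fintype.card V) := by
  refine ⟨Fintype.equivFin V, fun u v w h1 h2 _ hm => ?_⟩
  have huv : u = v := (Fintype.equivFin V).injective hm.1
  subst huv
  exact hasym u u h1 h1

lemma triChrom_flip {V : Type*} (A : V → V → Prop) :
    triChrom (fun a b => A b a) = triChrom A := by
  unfold triChrom
  congr 1
  ext d
  constructor <;>
  · rintro ⟨f, hf⟩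
    exact ⟨f, fun u v w h1 h2 h3 hm =>
      hf u w v h3 h2 h1 ⟨hm.1.trans hm.2, hm.2.symm⟩⟩

lemma aux_out {V : Type*} [Fintype V] (A : V → V → Prop) (c : ℕ)
    (hasym : ∀ x y, A x y → ¬ A y x)
    (hcrit1 : triChrom A = c)
    (hcrit2 : ∀ x : V,
      triChrom (fun a b : {y : V // y ≠ x} => A a.1 b.1) < c)
    (x : V) : c - 1 ≤ {u | A x u}.ncard := by
  classical
  by_contra hlt
  push_neg at hlt
  have hc1 : 1 ≤ c - 1 := by omega
  set A' := fun a b : {y : V // y ≠ x} => A a.1 b.1 with hA'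
  have hne : {d | TriFreeColorable A' d}.Nonempty :=
    ⟨Fintype.card {y : V // y ≠ x}, triFree_top (fun a b h => hasym a.1 b.1 h)⟩
  have hmem : TriFreeColorable A' (triChrom A') := Nat.sInf_mem hne
  have hlt' : triChrom A' < c := hcrit2 x
  have hle : triChrom A' ≤ c - 1 := by omega
  obtain ⟨f, hf⟩ := triFree_mono hmem hle
  set S' : Set {y : V // y ≠ x} := {u | A x u.1} with hS'
  have h1 : (f '' S').ncard ≤ S'.ncard := Set.ncard_image_le S'.toFinite
  have h2 : S'.ncard ≤ {u | A x u}.ncard :=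
    Set.ncard_le_ncard_of_injOn Subtype.val (fun a ha => ha)
      (Subtype.val_injective.injOn) (Set.toFinite _)
  have himg : (f '' S').ncard < c - 1 := by omega
  have hneu : f '' S' ≠ Set.univ := by
    intro h
    rw [h, Set.ncard_univ, Nat.card_eq_fintype_card, Fintype.card_fin] at himg
    omega
  obtain ⟨α, hα⟩ := Set.ne_univ_iff_exists_notMem _ |>.mp hneu
  set g : V → Fin (c - 1) := fun v => if h : v = x then α else f ⟨v, h⟩ with hg
  have hgood : TriFreeColorable A (c - 1) := by
    refine ⟨g, fun p q r hpq hqr hrp hm => ?_⟩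
    obtain ⟨e1, e2⟩ := hm
    by_cases hp : p = x
    · have hxq : A x q := hp ▸ hpq
      have hq : q ≠ x := by intro h; rw [h] at hxq; exact hasym x x hxq hxq
      apply hα
      refine ⟨⟨q, hq⟩, hxq, ?_⟩
      have e3 : g q = f ⟨q, hq⟩ := dif_neg hq
      have e4 : g p = α := by rw [hp]; exact dif_pos rfl
      rw [← e3, ← e1, e4]
    · by_cases hq : q = x
      · have hxr : A x r := hq ▸ hqr
        have hr : r ≠ x := by intro h; rw [h] at hxr; exact hasym x x hxr hxr
        apply hα
        refine ⟨⟨r, hr⟩, hxr, ?_⟩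
        have e3 : g r = f ⟨r, hr⟩ := dif_neg hr
        have e4 : g q = α := by rw [hq]; exact dif_pos rfl
        rw [← e3, ← e2, e4]
      · by_cases hr : r = x
        · have hxp : A x p := hr ▸ hrp
          apply hα
          refine ⟨⟨p, hp⟩, hxp, ?_⟩
          have e3 : g p = f ⟨p, hp⟩ := dif_neg hp
          have e4 : g r = α := by rw [hr]; exact dif_pos rfl
          rw [← e3, e1, e2, e4]
        · have e3 : g p = f ⟨p, hp⟩ := dif_neg hp
          have e4 : g q = f ⟨q, hq⟩ := dif_neg hq
          have e5 : g r = f ⟨r, hr⟩ := dif_neg hr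
          exact hf ⟨p, hp⟩ ⟨q, hq⟩ ⟨r, hr⟩ hpq hqr hrp
            ⟨by rw [← e3, ← e4]; exact e1, by rw [← e4, ← e5]; exact e2⟩
  have : triChrom A ≤ c - 1 := Nat.sInf_le hgood
  omega

theorem stmt10 {V : Type*} [Fintype V] (A : V → V → Prop) (c : ℕ)
    (hasym : ∀ x y, A x y → ¬ A y x)
    (hTT3 : ¬ ∃ u v w : V, A u v ∧ A v w ∧ A u w)
    (hcrit1 : triChrom A = c)
    (hcrit2 : ∀ x : V,
      triChrom (fun a b : {y : V // y ≠ x} => A a.1 b.1) < c) :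
    ∀ x : V, c - 1 ≤ {u | A x u}.ncard ∧ c - 1 ≤ {u | A u x}.ncard := by
  intro x
  constructor
  · exact aux_out A c hasym hcrit1 hcrit2 x
  · refine aux_out (fun a b => A b a) c (fun a b h => hasym b a h) ?_ ?_ x
    · rw [triChrom_flip]; exact hcrit1
    · intro y
      have : triChrom (fun a b : {z : V // z ≠ y} => A b.1 a.1)
          = triChrom (fun a b : {z : V // z ≠ y} => A a.1 b.1) :=
        triChrom_flip _
      rw [this]; exact hcrit2 y
end

section
/- Every oriented graph with no directed triangle, no induced TT3, and no induced P⁺(2,1) has chromatic number at most 3, and this bound is attained (directed odd cycles belong to this class and have chromatic number 3). -/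
/-!
Write `x ~ y` for adjacency in the underlying graph, which is triangle-free. Forbidding an induced
`P⁺(2,1)` says exactly that `a → b → c ← d` forces `a ~ d`. Hence if `u ≁ w` (allowing `u = w`),
`u → x` and `w → y`, then `x ≁ y`: walks of equal length from non-adjacent vertices end at
non-adjacent vertices.

The bound is proved by induction on the number of vertices. A vertex of degree at most 2, or one
whose neighbourhood lies inside that of another vertex, can be deleted and coloured afterwards.
Otherwise there is no directed path of length 2, and "having an in-neighbour" is a 2-colouring.
Indeed, a 2-path yields a strongly connected out-closed set `K` of ends of 2-paths, and every vertex
of `K` has an out-neighbour. If `u` and `w` are reached from a common root in `K` by walks of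
lengths `k` and `k + 1`, then `u ~ w`: closing these walks up inside `K` gives walks of equal length
from `u` and `w` ending at `u` and at an out-neighbour of `u`. With non-domination this rules out
two in-neighbours in `K` of one vertex, so `K` is a directed cycle, and a third neighbour of a
vertex of `K` is adjacent to every neighbour of its predecessor on the cycle.
-/

open SimpleGraph

namespace SimpleGraph

variable {V : Type*} {G : SimpleGraph V} {n : ℕ}

theorem colorable_of_induce_compl_singleton {v : V} (C : (G.induce {v}ᶜ).Coloring (Fin n))
    (c : Fin n) (hc : ∀ w (hw : w ≠ v), G.Adj v w → C ⟨w, hw⟩ ≠ c) : G.Colorable n := by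
  classical
  refine ⟨Coloring.mk (fun w => if hw : w = v then c else C ⟨w, hw⟩) fun {x y} hxy => ?_⟩
  by_cases hx : x = v
  · subst hx
    simpa [hxy.ne'] using (hc y hxy.ne' hxy).symm
  · by_cases hy : y = v
    · subst hy
      simpa [hx] using hc x hx hxy.symm
    · simpa [hx, hy] using C.valid (show (G.induce {v}ᶜ).Adj ⟨x, hx⟩ ⟨y, hy⟩ from hxy)

theorem colorable_of_ncard_neighborSet_lt [Finite V] {v : V} (hv : (G.neighborSet v).ncard < n)
    (h : (G.induce {v}ᶜ).Colorable n) : G.Colorable n := by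
  obtain ⟨C⟩ := h
  let g : G.neighborSet v → Fin n := fun w => C ⟨w, (G.ne_of_adj w.2).symm⟩
  obtain ⟨c, hc⟩ : ∃ c, ∀ w, g w ≠ c := by
    by_contra! hsurj
    have := Nat.card_le_card_of_surjective g hsurj
    rw [Nat.card_coe_set_eq, Nat.card_fin] at this
    omega
  exact colorable_of_induce_compl_singleton C c fun w _ hvw => hc ⟨w, hvw⟩

theorem colorable_of_neighborSet_subset {u v : V} (huv : u ≠ v)
    (hsub : G.neighborSet u ⊆ G.neighborSet v) (h : (G.induce {u}ᶜ).Colorable n) :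
    G.Colorable n := by
  obtain ⟨C⟩ := h
  exact colorable_of_induce_compl_singleton C (C ⟨v, huv.symm⟩) fun w hw huw =>
    C.valid (show (G.induce {u}ᶜ).Adj ⟨w, hw⟩ ⟨v, huv.symm⟩ from (hsub huw).symm)

end SimpleGraph

section Digraph

variable {V : Type*} {A : V → V → Prop}

theorem underlying_induce (A : V → V → Prop) (s : Set V) :
    underlying (fun x y : s => A x y) = (underlying A).induce s := by
  ext x y
  exact and_congr_left' Subtype.coe_ne_coe.symm

theorem underlying_colorable_two_of_forall_not_arc_arc (h : ∀ a b c, A a b → ¬ A b c) :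
    (underlying A).Colorable 2 := by
  let C : (underlying A).Coloring Prop := Coloring.mk (fun x => ∃ z, A z x) fun {x y} hxy heq => by
    rcases hxy.2 with hxy | hyx
    · obtain ⟨z, hzx⟩ : ∃ z, A z x := heq ▸ ⟨x, hxy⟩
      exact h z x y hzx hxy
    · obtain ⟨z, hzy⟩ : ∃ z, A z y := heq.symm ▸ ⟨y, hyx⟩
      exact h z y x hzy hyx
  simpa using C.colorable

def ReachesIn (A : V → V → Prop) : ℕ → V → V → Prop
  | 0, x, y => x = y
  | k + 1, x, y => ∃ z, ReachesIn A k x z ∧ A z y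

theorem ReachesIn.trans {k j : ℕ} {x y z : V} (hxy : ReachesIn A k x y)
    (hyz : ReachesIn A j y z) : ReachesIn A (k + j) x z := by
  induction j generalizing z with
  | zero => obtain rfl := hyz; exact hxy
  | succ j ih => obtain ⟨w, hyw, hwz⟩ := hyz; exact ⟨w, ih hyw, hwz⟩

def IsOutClosed (A : V → V → Prop) (S : Set V) : Prop :=
  ∀ ⦃x y⦄, x ∈ S → A x y → y ∈ S

namespace IsOutClosed

variable {S : Set V}

theorem mem_of_reachesIn (hS : IsOutClosed A S) {k : ℕ} {x y : V} (hx : x ∈ S)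
    (hxy : ReachesIn A k x y) : y ∈ S := by
  induction k generalizing y with
  | zero => obtain rfl := hxy; exact hx
  | succ k ih => obtain ⟨z, hxz, hzy⟩ := hxy; exact hS (ih hxz) hzy

theorem exists_arc_mem_of_reachesIn (hS : IsOutClosed A S) {k : ℕ} {x y : V} (hy : y ∈ S)
    (hyx : ReachesIn A k y x) (hne : y ≠ x) : ∃ z ∈ S, A z x := by
  cases k with
  | zero => exact absurd hyx hne
  | succ k => obtain ⟨z, hyz, hzx⟩ := hyx; exact ⟨z, hS.mem_of_reachesIn hy hyz, hzx⟩

theorem exists_subset_strongly_connected [Finite V] (hS : IsOutClosed A S) (hne : S.Nonempty) :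
    ∃ K ⊆ S, K.Nonempty ∧ IsOutClosed A K ∧ ∀ x ∈ K, ∀ y ∈ K, ∃ k, ReachesIn A k x y := by
  obtain ⟨K, hKS, ⟨hKne, hK⟩, hmin⟩ :=
    exists_minimal_le_of_wellFoundedLT (fun T : Set V => T.Nonempty ∧ IsOutClosed A T) S ⟨hne, hS⟩
  refine ⟨K, hKS, hKne, hK, fun x hx y hy => ?_⟩
  have hreach : IsOutClosed A {y | ∃ k, ReachesIn A k x y} :=
    fun y z hy hyz => by
      obtain ⟨k, hk⟩ := hy
      exact ⟨k + 1, y, hk, hyz⟩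
  have hsub : {y | ∃ k, ReachesIn A k x y} ⊆ K := fun y hy => by
    obtain ⟨k, hk⟩ := hy
    exact hK.mem_of_reachesIn hx hk
  exact hmin (y := {y | ∃ k, ReachesIn A k x y}) ⟨⟨x, 0, rfl⟩, hreach⟩ hsub hy

theorem arc_unique_of_in_arc_unique [Finite V] (hS : IsOutClosed A S)
    (hout : ∀ x ∈ S, ∃ y, A x y) (hin : ∀ x ∈ S, ∀ y ∈ S, ∀ z, A x z → A y z → x = y)
    {x y z : V} (hx : x ∈ S) (hxy : A x y) (hxz : A x z) : y = z := by
  choose g hg using fun x : S => hout x x.2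
  let g' : S → S := fun x => ⟨g x, hS x.2 (hg x)⟩
  have hinj : g'.Injective := fun a b hab => by
    have hgab : g a = g b := congrArg Subtype.val hab
    exact Subtype.ext (hin a a.2 b b.2 (g a) (hg a) (hgab ▸ hg b))
  have hsucc : ∀ w, A x w → w = g ⟨x, hx⟩ := fun w hxw => by
    obtain ⟨p, hp⟩ := Finite.injective_iff_surjective.mp hinj ⟨w, hS hx hxw⟩
    have hgp : g p = w := congrArg Subtype.val hp
    obtain rfl : p = ⟨x, hx⟩ := Subtype.ext (hin p p.2 x hx w (hgp ▸ hg p) hxw)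
    exact hgp.symm
  exact (hsucc y hxy).trans (hsucc z hxz).symm

end IsOutClosed

end Digraph

structure IsTriangleFreeP21Free {V : Type*} (A : V → V → Prop) : Prop where
  asymm : ∀ x y, A x y → ¬ A y x
  not_cyclic_triangle : ¬ ∃ u v w, A u v ∧ A v w ∧ A w u
  not_transitive_triangle : ¬ ∃ u v w, A u v ∧ A v w ∧ A u w
  not_induced_p21 : ¬ ∃ a b c d, A a b ∧ A b c ∧ A d c ∧
    ¬ (underlying A).Adj a c ∧ ¬ (underlying A).Adj a d ∧ ¬ (underlying A).Adj b d

namespace IsTriangleFreeP21Free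

variable {V : Type*} {A : V → V → Prop}

theorem induce (hA : IsTriangleFreeP21Free A) (s : Set V) :
    IsTriangleFreeP21Free (fun x y : s => A x y) where
  asymm x y := hA.asymm x y
  not_cyclic_triangle := fun ⟨u, v, w, h⟩ => hA.not_cyclic_triangle ⟨u, v, w, h⟩
  not_transitive_triangle := fun ⟨u, v, w, h⟩ => hA.not_transitive_triangle ⟨u, v, w, h⟩
  not_induced_p21 := by
    rw [underlying_induce]
    exact fun ⟨a, b, c, d, h⟩ => hA.not_induced_p21 ⟨a, b, c, d, h⟩

theorem adj_of_arc (hA : IsTriangleFreeP21Free A) {x y : V} (hxy : A x y) :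
    (underlying A).Adj x y :=
  ⟨by rintro rfl; exact hA.asymm x x hxy hxy, Or.inl hxy⟩

theorem not_adj_of_arc_of_arc (hA : IsTriangleFreeP21Free A) {a b c : V} (hab : A a b)
    (hbc : A b c) : ¬ (underlying A).Adj a c
  | ⟨_, Or.inl hac⟩ => hA.not_transitive_triangle ⟨a, b, c, hab, hbc, hac⟩
  | ⟨_, Or.inr hca⟩ => hA.not_cyclic_triangle ⟨a, b, c, hab, hbc, hca⟩

theorem not_adj_of_arc_of_arc_same_head (hA : IsTriangleFreeP21Free A) {x y z : V}
    (hyx : A y x) (hzx : A z x) : ¬ (underlying A).Adj y z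
  | ⟨_, Or.inl hyz⟩ => hA.not_transitive_triangle ⟨y, z, x, hyz, hzx, hyx⟩
  | ⟨_, Or.inr hzy⟩ => hA.not_transitive_triangle ⟨z, y, x, hzy, hyx, hzx⟩

theorem adj_of_arc_of_arc_of_arc (hA : IsTriangleFreeP21Free A) {a b c d : V} (hab : A a b)
    (hbc : A b c) (hdc : A d c) : (underlying A).Adj a d := by
  by_contra had
  exact hA.not_induced_p21 ⟨a, b, c, d, hab, hbc, hdc, hA.not_adj_of_arc_of_arc hab hbc, had,
    hA.not_adj_of_arc_of_arc_same_head hbc hdc⟩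

theorem not_adj_of_not_adj_of_arc_of_arc (hA : IsTriangleFreeP21Free A) {u w x y : V}
    (huw : ¬ (underlying A).Adj u w) (hux : A u x) (hwy : A w y) : ¬ (underlying A).Adj x y := by
  rintro ⟨-, hxy | hyx⟩
  · exact huw (hA.adj_of_arc_of_arc_of_arc hux hxy hwy)
  · exact huw (hA.adj_of_arc_of_arc_of_arc hwy hyx hux).symm

theorem not_adj_of_not_adj_of_reachesIn (hA : IsTriangleFreeP21Free A) {u w x y : V} {j : ℕ}
    (huw : ¬ (underlying A).Adj u w) (hux : ReachesIn A j u x) (hwy : ReachesIn A j w y) :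
    ¬ (underlying A).Adj x y := by
  induction j generalizing x y with
  | zero => obtain rfl := hux; obtain rfl := hwy; exact huw
  | succ j ih =>
    obtain ⟨x', hux', hx'x⟩ := hux
    obtain ⟨y', hwy', hy'y⟩ := hwy
    exact hA.not_adj_of_not_adj_of_arc_of_arc (ih hux' hwy') hx'x hy'y

theorem adj_of_reachesIn_of_reachesIn_succ (hA : IsTriangleFreeP21Free A) {r u w h : V}
    {k ρ m : ℕ} (hru : ReachesIn A k r u) (hrw : ReachesIn A (k + 1) r w)
    (hur : ReachesIn A ρ u r) (hwu : ReachesIn A m w u) (huh : A u h) :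
    (underlying A).Adj u w := by
  by_contra huw
  -- `u ⇝ r ⇝ w ⇝ u` and `w ⇝ u ⇝ r ⇝ u → h` have the same length
  have hloop : ReachesIn A (m + ρ + k + 1) u u := by
    have := (hur.trans hrw).trans hwu
    rwa [show ρ + (k + 1) + m = m + ρ + k + 1 by omega] at this
  have hpath : ReachesIn A (m + ρ + k + 1) w h := ⟨u, (hwu.trans hur).trans hru, huh⟩
  exact hA.not_adj_of_not_adj_of_reachesIn huw hloop hpath (hA.adj_of_arc huh)

section NoDominatedVertex

variable (hA : IsTriangleFreeP21Free A)
  (hdom : ∀ u v, u ≠ v → ¬ (underlying A).neighborSet u ⊆ (underlying A).neighborSet v)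
include hA hdom

theorem exists_arc_of_arc_of_arc {a b c : V} (hab : A a b) (hbc : A b c) : ∃ y, A c y := by
  by_contra! hsink
  have hca : c ≠ a := by rintro rfl; exact hA.asymm c b hab hbc
  obtain ⟨z, hcz, haz⟩ := Set.not_subset.mp (hdom c a hca)
  exact haz (hA.adj_of_arc_of_arc_of_arc hab hbc (hcz.2.resolve_left (hsink z)))

theorem exists_arc_not_adj_of_arc_of_arc {u v c : V} (huv : u ≠ v) (huc : A u c)
    (hvc : A v c) : ∃ e, A u e ∧ ¬ (underlying A).Adj v e := by
  obtain ⟨e, hue, hve⟩ := Set.not_subset.mp (hdom u v huv)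
  refine ⟨e, hue.2.resolve_right fun heu => hve ?_, hve⟩
  exact (hA.adj_of_arc_of_arc_of_arc heu huc hvc).symm

variable {K : Set V} (hK : IsOutClosed A K) (hsc : ∀ x ∈ K, ∀ y ∈ K, ∃ k, ReachesIn A k x y)
  (hout : ∀ x ∈ K, ∃ y, A x y)
include hK hsc hout

theorem eq_of_arc_of_arc_of_mem {u v c : V} (hu : u ∈ K) (hv : v ∈ K) (huc : A u c)
    (hvc : A v c) : u = v := by
  by_contra huv
  obtain ⟨e, hue, hve⟩ := hA.exists_arc_not_adj_of_arc_of_arc hdom huv huc hvc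
  obtain ⟨f, hvf, huf⟩ := hA.exists_arc_not_adj_of_arc_of_arc hdom (Ne.symm huv) hvc huc
  have hc : c ∈ K := hK hu huc
  obtain ⟨j, hcu⟩ := hsc c hc u hu
  obtain ⟨a, ha, hau⟩ := hK.exists_arc_mem_of_reachesIn hc hcu (hA.adj_of_arc huc).ne'
  -- either orientation of `a ~ v` puts a non-adjacent pair at distances `1` and `2` from a root
  rcases (hA.adj_of_arc_of_arc_of_arc hau huc hvc).2 with hav | hva
  · obtain ⟨ρ, hva'⟩ := hsc v hv a ha
    obtain ⟨m, hev⟩ := hsc e (hK hu hue) v hv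
    obtain ⟨h, hvh⟩ := hout v hv
    exact hve (hA.adj_of_reachesIn_of_reachesIn_succ (k := 1) ⟨a, rfl, hav⟩
      ⟨u, ⟨a, rfl, hau⟩, hue⟩ hva' hev hvh)
  · have hf : f ∈ K := hK hv hvf
    obtain ⟨ρ, hfv⟩ := hsc f hf v hv
    obtain ⟨m, huf'⟩ := hsc u hu f hf
    obtain ⟨h, hfh⟩ := hout f hf
    exact huf (hA.adj_of_reachesIn_of_reachesIn_succ (k := 1) ⟨v, rfl, hvf⟩
      ⟨a, ⟨v, rfl, hva⟩, hau⟩ hfv huf' hfh).symm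

theorem false_of_forall_eq_of_arc_of_arc [Finite V]
    (hdeg : ∀ v, 3 ≤ ((underlying A).neighborSet v).ncard) (hne : K.Nonempty)
    (hin : ∀ x ∈ K, ∀ y ∈ K, ∀ z, A x z → A y z → x = y) : False := by
  obtain ⟨c, hc⟩ := hne
  obtain ⟨y, hcy⟩ := hout c hc
  obtain ⟨k, hyc⟩ := hsc y (hK hc hcy) c hc
  obtain ⟨b, hb, hbc⟩ := hK.exists_arc_mem_of_reachesIn (hK hc hcy) hyc (hA.adj_of_arc hcy).ne'
  obtain ⟨d, hcd, hd⟩ : ∃ d ∈ (underlying A).neighborSet c, d ∉ ({y, b} : Set V) := by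
    refine Set.not_subset.mp fun hsub => ?_
    have := (hdeg c).trans (Set.ncard_le_ncard hsub)
    have := Set.ncard_insert_le y {b}
    rw [Set.ncard_singleton] at this
    omega
  simp only [Set.mem_insert_iff, Set.mem_singleton_iff, not_or] at hd
  have hdc : A d c := hcd.2.resolve_left fun hcd =>
    hd.1 (hK.arc_unique_of_in_arc_unique hout hin hc hcd hcy)
  -- `c → y` and `b → c` are the only arcs out of `c` and `b`, so `d` is adjacent to all of `N(b)`
  obtain ⟨z, hbz, hdz⟩ := Set.not_subset.mp (hdom b d (Ne.symm hd.2))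
  rcases hbz.2 with hbz | hzb
  · exact hdz (hK.arc_unique_of_in_arc_unique hout hin hb hbc hbz ▸ (hA.adj_of_arc hdc))
  · exact hdz (hA.adj_of_arc_of_arc_of_arc hzb hbc hdc).symm

end NoDominatedVertex

theorem not_arc_of_arc [Finite V] (hA : IsTriangleFreeP21Free A)
    (hdeg : ∀ v, 3 ≤ ((underlying A).neighborSet v).ncard)
    (hdom : ∀ u v, u ≠ v → ¬ (underlying A).neighborSet u ⊆ (underlying A).neighborSet v)
    {a b c : V} (hab : A a b) : ¬ A b c := by
  intro hbc
  have hD : IsOutClosed A {z | ∃ x y, A x y ∧ A y z} := fun z w hz hzw => by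
    obtain ⟨x, y, -, hyz⟩ := hz
    exact ⟨y, z, hyz, hzw⟩
  obtain ⟨K, hKD, hKne, hK, hsc⟩ := hD.exists_subset_strongly_connected ⟨c, a, b, hab, hbc⟩
  have hout : ∀ x ∈ K, ∃ y, A x y := fun x hx => by
    obtain ⟨p, q, hpq, hqx⟩ := hKD hx
    exact hA.exists_arc_of_arc_of_arc hdom hpq hqx
  exact hA.false_of_forall_eq_of_arc_of_arc hdom hK hsc hout hdeg hKne
    fun x hx y hy z => hA.eq_of_arc_of_arc_of_mem hdom hK hsc hout hx hy

theorem colorable_three [Finite V] (hA : IsTriangleFreeP21Free A) :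
    (underlying A).Colorable 3 := by
  induction h : Nat.card V using Nat.strong_induction_on generalizing V with
  | _ n ih =>
    have hdel : ∀ v : V, ((underlying A).induce {v}ᶜ).Colorable 3 := fun v => by
      rw [← underlying_induce]
      refine ih _ ?_ (hA.induce _) rfl
      rw [← h, Nat.card_coe_set_eq]
      exact Set.ncard_lt_card (Set.compl_ne_univ.mpr (Set.singleton_nonempty v))
    by_cases hlow : ∃ v, ((underlying A).neighborSet v).ncard < 3
    · obtain ⟨v, hv⟩ := hlow
      exact colorable_of_ncard_neighborSet_lt hv (hdel v)
    by_cases hdom : ∃ u v, u ≠ v ∧ (underlying A).neighborSet u ⊆ (underlying A).neighborSet v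
    · obtain ⟨u, v, huv, hsub⟩ := hdom
      exact colorable_of_neighborSet_subset huv hsub (hdel u)
    push Not at hlow hdom
    have hbip : (underlying A).Colorable 2 := underlying_colorable_two_of_forall_not_arc_arc
      fun _ _ _ hab => hA.not_arc_of_arc hlow hdom hab
    exact hbip.mono (by norm_num)

end IsTriangleFreeP21Free

def directedCycle (n : ℕ) [NeZero n] : Fin n → Fin n → Prop := fun x y => y = x + 1

theorem underlying_directedCycle (n : ℕ) :
    underlying (directedCycle (n + 2)) = cycleGraph (n + 2) := by
  ext u v
  simp only [underlying, directedCycle, cycleGraph_adj, sub_eq_iff_eq_add']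
  refine ⟨fun h => h.2.symm, fun h => ⟨?_, h.symm⟩⟩
  rintro rfl
  simp at h

open Fin.CommRing in
theorem isTriangleFreeP21Free_directedCycle (n : ℕ) :
    IsTriangleFreeP21Free (directedCycle (n + 4)) := by
  have hk : ∀ k : ℕ, 0 < k → k < 4 → (k : Fin (n + 4)) ≠ 0 := fun k hk0 hk => by
    simp [Fin.ext_iff, Nat.mod_eq_of_lt (show k < n + 4 by omega), hk0.ne']
  refine ⟨?_, ?_, ?_, ?_⟩
  · rintro x _ rfl (h : x = x + 1 + 1)
    exact hk 2 (by norm_num) (by norm_num) (by push_cast; linear_combination -h)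
  · rintro ⟨u, _, _, rfl, rfl, h : u = u + 1 + 1 + 1⟩
    exact hk 3 (by norm_num) (by norm_num) (by push_cast; linear_combination -h)
  · rintro ⟨u, _, _, rfl, rfl, h : u + 1 + 1 = u + 1⟩
    exact hk 1 (by norm_num) (by norm_num) (by push_cast; linear_combination h)
  · rintro ⟨a, _, _, d, rfl, rfl, hdc, -, had, -⟩
    obtain rfl : a + 1 = d := add_right_cancel hdc
    refine had ⟨fun h => hk 1 (by norm_num) (by norm_num) ?_, Or.inl rfl⟩
    push_cast
    linear_combination -h

theorem chromaticNumber_underlying_directedCycle (n : ℕ) (hn : Odd (n + 2)) :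
    (underlying (directedCycle (n + 2))).chromaticNumber = 3 := by
  rw [underlying_directedCycle]
  exact chromaticNumber_cycleGraph_of_odd _ (by omega) hn

theorem stmt14 :
    (∀ (V : Type) [Fintype V] (A : V → V → Prop),
      (∀ x y, A x y → ¬ A y x) →
      (¬ ∃ u v w : V, A u v ∧ A v w ∧ A w u) →
      (¬ ∃ u v w : V, A u v ∧ A v w ∧ A u w) →
      (¬ ∃ a b c d : V, A a b ∧ A b c ∧ A d c ∧
        ¬ (underlying A).Adj a c ∧ ¬ (underlying A).Adj a d ∧
        ¬ (underlying A).Adj b d) →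
      (underlying A).chromaticNumber ≤ 3) ∧
    (∃ (V : Type) (_ : Fintype V) (A : V → V → Prop),
      (∀ x y, A x y → ¬ A y x) ∧
      (¬ ∃ u v w : V, A u v ∧ A v w ∧ A w u) ∧
      (¬ ∃ u v w : V, A u v ∧ A v w ∧ A u w) ∧
      (¬ ∃ a b c d : V, A a b ∧ A b c ∧ A d c ∧
        ¬ (underlying A).Adj a c ∧ ¬ (underlying A).Adj a d ∧
        ¬ (underlying A).Adj b d) ∧
      (underlying A).chromaticNumber = 3) := by
  refine ⟨fun V _ A hasymm hC3 hTT3 hP21 => ?_, ?_⟩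
  · have hcol := IsTriangleFreeP21Free.colorable_three ⟨hasymm, hC3, hTT3, hP21⟩
    simpa using hcol.chromaticNumber_le
  · obtain ⟨hasymm, hC3, hTT3, hP21⟩ := isTriangleFreeP21Free_directedCycle 1
    exact ⟨Fin 5, inferInstance, directedCycle 5, hasymm, hC3, hTT3, hP21,
      chromaticNumber_underlying_directedCycle 3 (by decide)⟩
end

section
/- Let D be a strongly connected oriented graph with no induced TT3 and no induced P⁺(2,1). If D contains an induced odd cycle of length at least 7, then D is an extension of that cycle; in particular χ(D) = 3. -/
/-!
Along the induced cycle, `P⁺(2,1)`-freeness forbids a change of direction right after two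
consecutive arcs of the same direction, and an odd cycle has two such consecutive arcs; so the cycle
is directed, possibly after reversing it.

Let `v` be a directed induced cycle of length at least 7. If a vertex `x` has an out-neighbour on
`v`, then `x` is a clone of some `v ℓ`: its only in-neighbour on `v` is `v (ℓ - 1)` and its only
out-neighbour `v (ℓ + 1)`. Oddness is used to find a first pair `v (i - 2) → x → v i`, and the
forbidden `TT3` and `P⁺(2,1)` exclude everything else. Having an out-neighbour on `v` propagates
backwards along arcs, so by strong connectivity every vertex is a clone, and its position `ℓ` gives
the parts `V_ℓ` of the extension. To see that an arc `x → y` goes from `V_ℓ` to `V_(ℓ+1)`, replace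
the cycle vertex at the position of `y` by `y` itself: this is again an induced directed cycle, and
`x` is still a clone of position `ℓ` on it.

The extension maps onto the odd cycle and contains it, so `χ = 3`.
-/

namespace ZMod

variable {q : ℕ}

theorem one_ne_zero_of_lt (hq : 1 < q) : (1 : ZMod q) ≠ 0 :=
  have : Fact (1 < q) := ⟨hq⟩
  one_ne_zero

theorem ofNat_ne_zero_of_lt (k : ℕ) [k.AtLeastTwo] (hk : k < q) :
    (OfNat.ofNat k : ZMod q) ≠ 0 := by
  rw [← Nat.cast_ofNat, Ne, natCast_eq_zero_iff]
  exact Nat.not_dvd_of_pos_of_lt (NeZero.pos k) hk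

theorem forall_of_forall_add [NeZero q] {g : ZMod q} (hg : IsUnit g) {p : ZMod q → Prop}
    {i : ZMod q} (hi : p i) (h : ∀ j, p j → p (j + g)) (j : ZMod q) : p j := by
  obtain ⟨u, rfl⟩ := hg
  have key : ∀ n : ℕ, p (i + n * u) := by
    intro n
    induction n with
    | zero => simpa using hi
    | succ n ih => simpa [add_mul, add_assoc] using h _ ih
  simpa [mul_assoc] using key ((j - i) * ↑u⁻¹ : ZMod q).val

theorem isUnit_two_of_odd (hq : Odd q) : IsUnit (2 : ZMod q) := by
  exact_mod_cast (isUnit_iff_coprime 2 q).mpr (Nat.coprime_two_left.mpr hq)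

theorem exists_iff_add_one_of_odd (hq : Odd q) (p : ZMod q → Prop) : ∃ k, p k ↔ p (k + 1) := by
  have : NeZero q := ⟨hq.pos.ne'⟩
  by_contra h
  simp only [not_exists] at h
  have h2 : ∀ k, p (k + 2) ↔ p k := fun k => by
    have := h (k + 1)
    rw [add_assoc, one_add_one_eq_two] at this
    have := h k
    tauto
  by_cases h0 : p 0
  · have hall := forall_of_forall_add (isUnit_two_of_odd hq) h0 fun j hj => (h2 j).2 hj
    exact h 0 (iff_of_true (hall 0) (hall _))
  · have hall := forall_of_forall_add (p := fun j => ¬ p j) (isUnit_two_of_odd hq) h0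
      fun j hj => by rwa [← h2 j] at hj
    exact h 0 (iff_of_false (hall 0) (hall _))

end ZMod

section

variable {V : Type*} {A : V → V → Prop} {q : ℕ}

def P21Free (A : V → V → Prop) : Prop :=
  ∀ a b c d, A a b → A b c → A d c →
    (underlying A).Adj a c ∨ (underlying A).Adj a d ∨ (underlying A).Adj b d

structure IsOrientedTT3P21Free (A : V → V → Prop) : Prop where
  asymm : ∀ x y, A x y → ¬ A y x
  not_tt3 : ∀ u v w, A u v → A v w → ¬ A u w
  p21Free : P21Free A

structure IsInducedDirectedCycle (A : V → V → Prop) (v : ZMod q → V) : Prop where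
  arc : ∀ i, A (v i) (v (i + 1))
  eq_of_adj : ∀ {i j}, (underlying A).Adj (v i) (v j) → j = i + 1 ∨ i = j + 1

/-- `x` belongs to the part `V_ℓ` of an extension of the cycle `v`. -/
structure IsCloneAt (A : V → V → Prop) (v : ZMod q → V) (x : V) (ℓ : ZMod q) : Prop where
  arc_to_iff : ∀ j, A (v j) x ↔ j = ℓ - 1
  arc_from_iff : ∀ j, A x (v j) ↔ j = ℓ + 1

section Orientation

variable {v : ZMod q → V} (hP21 : P21Free A) (hq : 5 ≤ q)
  (hadj : ∀ i, (underlying A).Adj (v i) (v (i + 1)))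
  (hind : ∀ i j, (underlying A).Adj (v i) (v j) → j = i + 1 ∨ i = j + 1)
include hP21 hq hadj hind

theorem arc_add_two_of_arc_of_arc {k : ZMod q} (h₀ : A (v k) (v (k + 1)))
    (h₁ : A (v (k + 1)) (v (k + 2))) : A (v (k + 2)) (v (k + 3)) := by
  have h1 : (1 : ZMod q) ≠ 0 := ZMod.one_ne_zero_of_lt (by omega)
  have h2 : (2 : ZMod q) ≠ 0 := ZMod.ofNat_ne_zero_of_lt 2 (by omega)
  have h3 : (3 : ZMod q) ≠ 0 := ZMod.ofNat_ne_zero_of_lt 3 (by omega)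
  have h4 : (4 : ZMod q) ≠ 0 := ZMod.ofNat_ne_zero_of_lt 4 (by omega)
  rw [show k + 3 = k + 2 + 1 by ring]
  refine (hadj (k + 2)).2.resolve_right fun h₂ => ?_
  rcases hP21 _ _ _ _ h₀ h₁ (by rwa [show k + 2 + 1 = k + 3 by ring] at h₂) with h | h | h
    <;> rcases hind _ _ h with h' | h'
  · exact h1 (by linear_combination h')
  · exact h3 (by linear_combination -h')
  · exact h2 (by linear_combination h')
  · exact h4 (by linear_combination -h')
  · exact h1 (by linear_combination h')
  · exact h3 (by linear_combination -h')

theorem arc_forall_of_arc_of_arc {k : ZMod q} (h₀ : A (v k) (v (k + 1)))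
    (h₁ : A (v (k + 1)) (v (k + 2))) (i : ZMod q) : A (v i) (v (i + 1)) := by
  have : NeZero q := ⟨by omega⟩
  refine (ZMod.forall_of_forall_add
    (p := fun j => A (v j) (v (j + 1)) ∧ A (v (j + 1)) (v (j + 2))) isUnit_one ⟨h₀, h₁⟩
    (fun j ⟨hj₀, hj₁⟩ => ?_) i).1
  have hj₂ := arc_add_two_of_arc_of_arc hP21 hq hadj hind hj₀ hj₁
  rw [add_assoc, one_add_one_eq_two, add_assoc, show (1 : ZMod q) + 2 = 3 by norm_num]
  exact ⟨hj₁, hj₂⟩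

theorem isInducedDirectedCycle_or_neg (hodd : Odd q) :
    IsInducedDirectedCycle A v ∨ IsInducedDirectedCycle A fun i => v (-i) := by
  obtain ⟨k, hk⟩ := ZMod.exists_iff_add_one_of_odd hodd fun j => A (v j) (v (j + 1))
  by_cases h₀ : A (v k) (v (k + 1))
  · refine Or.inl ⟨arc_forall_of_arc_of_arc hP21 hq hadj hind h₀ ?_, hind _ _⟩
    simpa only [add_assoc, one_add_one_eq_two] using hk.1 h₀
  · have hadj' : ∀ i, (underlying A).Adj (v (-i)) (v (-(i + 1))) := fun i => by
      simpa using (hadj (-(i + 1))).symm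
    have hind' : ∀ i j, (underlying A).Adj (v (-i)) (v (-j)) → j = i + 1 ∨ i = j + 1 :=
      fun i j h => by
        rcases hind _ _ h with h' | h'
        · right; linear_combination h'
        · left; linear_combination h'
    refine Or.inr ⟨arc_forall_of_arc_of_arc hP21 hq hadj' hind' (k := -(k + 2)) ?_ ?_, hind' _ _⟩
    · convert (hadj (k + 1)).2.resolve_left fun h => h₀ (hk.2 h) using 2 <;> ring
    · convert (hadj k).2.resolve_left h₀ using 2 <;> ring

end Orientation

theorem IsCloneAt.eq_of_adj {v : ZMod q → V} {y : V} {ℓ j : ZMod q} (hy : IsCloneAt A v y ℓ)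
    (h : (underlying A).Adj y (v j)) : j = ℓ - 1 ∨ j = ℓ + 1 :=
  h.2.imp (hy.arc_from_iff j).1 (hy.arc_to_iff j).1 |>.symm

theorem IsCloneAt.isInducedDirectedCycle_update {v : ZMod q → V} {y : V} {b : ZMod q}
    (hy : IsCloneAt A v y b) (hv : IsInducedDirectedCycle A v) (hq : 2 ≤ q) :
    IsInducedDirectedCycle A (Function.update v b y) := by
  have h1 : (1 : ZMod q) ≠ 0 := ZMod.one_ne_zero_of_lt hq
  constructor
  · intro i
    by_cases hi : i = b
    · subst hi
      rw [Function.update_self, Function.update_of_ne fun h => h1 (by linear_combination h)]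
      exact (hy.arc_from_iff _).2 rfl
    rw [Function.update_of_ne hi]
    by_cases hi' : i + 1 = b
    · rw [hi', Function.update_self]
      exact (hy.arc_to_iff _).2 (by rw [← hi', add_sub_cancel_right])
    · rw [Function.update_of_ne hi']
      exact hv.arc i
  · intro i j h
    by_cases hi : i = b <;> by_cases hj : j = b
    · rw [hi, hj] at h
      exact (h.ne rfl).elim
    · rw [hi, Function.update_self, Function.update_of_ne hj] at h
      rcases hy.eq_of_adj h with h' | h'
      · right; linear_combination hi - h'
      · left; linear_combination h' - hi
    · rw [hj, Function.update_self, Function.update_of_ne hi] at h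
      rcases hy.eq_of_adj h.symm with h' | h'
      · left; linear_combination hj - h'
      · right; linear_combination h' - hj
    · rw [Function.update_of_ne hi, Function.update_of_ne hj] at h
      exact hv.eq_of_adj h

theorem IsCloneAt.eq_of_update {v : ZMod q → V} {x y : V} {a b ℓ : ZMod q}
    (hx : IsCloneAt A v x a) (hx' : IsCloneAt A (Function.update v b y) x ℓ) (hq : 3 ≤ q) :
    ℓ = a := by
  have h2 : (2 : ZMod q) ≠ 0 := ZMod.ofNat_ne_zero_of_lt 2 (by omega)
  by_cases hb : a - 1 = b
  · have hb' : a + 1 ≠ b := fun h => h2 (by linear_combination h - hb)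
    have h := (hx'.arc_from_iff (a + 1)).1
      (by rw [Function.update_of_ne hb']; exact (hx.arc_from_iff _).2 rfl)
    linear_combination -h
  · have h := (hx'.arc_to_iff (a - 1)).1
      (by rw [Function.update_of_ne hb]; exact (hx.arc_to_iff _).2 rfl)
    linear_combination -h

namespace IsInducedDirectedCycle

variable {v : ZMod q → V} (hv : IsInducedDirectedCycle A v)
include hv

theorem arc_of_eq {i j : ZMod q} (h : j = i + 1) : A (v i) (v j) := h ▸ hv.arc i

variable (hA : IsOrientedTT3P21Free A)
include hA

theorem arc_or_arc_sub_two (hq : 4 ≤ q) {x : V} {j : ZMod q} (hx : A x (v j)) :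
    A x (v (j - 2)) ∨ A (v (j - 2)) x := by
  have h1 : (1 : ZMod q) ≠ 0 := ZMod.one_ne_zero_of_lt (by omega)
  have h3 : (3 : ZMod q) ≠ 0 := ZMod.ofNat_ne_zero_of_lt 3 (by omega)
  rcases hA.p21Free (v (j - 2)) (v (j - 1)) (v j) x (hv.arc_of_eq (by ring))
    (hv.arc_of_eq (by ring)) hx with h | h | h
  · rcases hv.eq_of_adj h with h' | h'
    · exact (h1 (by linear_combination h')).elim
    · exact (h3 (by linear_combination -h')).elim
  · exact h.2.symm
  · rcases h.2 with h' | h'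
    · exact (hA.not_tt3 _ _ _ h' hx (hv.arc_of_eq (by ring))).elim
    · exact (hA.not_tt3 _ _ _ h' (hv.arc_of_eq (by ring)) hx).elim

theorem exists_arc_arc_sub_two (hq : 4 ≤ q) (hodd : Odd q) {x : V} (hx : ∃ j, A x (v j)) :
    ∃ i, A x (v i) ∧ A (v (i - 2)) x := by
  have : NeZero q := ⟨by omega⟩
  obtain ⟨j, hj⟩ := hx
  by_contra! h
  have hall : ∀ i, A x (v i) := ZMod.forall_of_forall_add (ZMod.isUnit_two_of_odd hodd).neg hj
    fun i hi => by
      rw [← sub_eq_add_neg]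
      exact (hv.arc_or_arc_sub_two hA hq hi).resolve_right (h i hi)
  exact hA.not_tt3 _ _ _ (hall 0) (hv.arc 0) (hall _)

theorem eq_add_two_or_eq_sub_one {x : V} {p j : ZMod q} (hp : A (v p) x) (hj : A x (v j)) :
    j = p + 2 ∨ j = p - 1 := by
  rcases hA.p21Free (v p) x (v j) (v (j - 1)) hp hj (hv.arc_of_eq (by ring)) with h | h | h
  · rcases hv.eq_of_adj h with h' | h'
    · exact (hA.not_tt3 _ _ _ hp hj (hv.arc_of_eq h')).elim
    · right; linear_combination -h'
  · rcases hv.eq_of_adj h with h' | h'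
    · left; linear_combination h'
    · obtain rfl : p = j := by linear_combination h'
      exact (hA.asymm _ _ hp hj).elim
  · rcases h.2 with h' | h'
    · exact (hA.not_tt3 _ _ _ h' (hv.arc_of_eq (by ring)) hj).elim
    · exact (hA.not_tt3 _ _ _ h' hj (hv.arc_of_eq (by ring))).elim

theorem arc_sub_one_or_eq_or_eq_sub_two {x : V} {k m : ZMod q} (hk : A (v k) x)
    (hm : A (v m) x) : A x (v (k - 1)) ∨ m = k ∨ m = k - 2 := by
  rcases hA.p21Free (v (k - 1)) (v k) x (v m) (hv.arc_of_eq (by ring)) hk hm with h | h | h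
  · rcases h.2 with h' | h'
    · exact (hA.not_tt3 _ _ _ (hv.arc_of_eq (by ring)) hk h').elim
    · exact Or.inl h'
  · rcases hv.eq_of_adj h with h' | h'
    · right; left; linear_combination h'
    · right; right; linear_combination -h'
  · rcases hv.eq_of_adj h with h' | h'
    · exact (hA.not_tt3 _ _ _ (hv.arc_of_eq h') hm hk).elim
    · exact (hA.not_tt3 _ _ _ (hv.arc_of_eq h') hk hm).elim

theorem eq_of_arc_of_arc (hq : 5 ≤ q) {x : V} {k m : ZMod q} (hk : A (v k) x) (hm : A (v m) x)
    (hk' : ¬ A x (v (k - 1))) (hm' : ¬ A x (v (m - 1))) : m = k := by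
  have h4 : (4 : ZMod q) ≠ 0 := ZMod.ofNat_ne_zero_of_lt 4 (by omega)
  rcases (hv.arc_sub_one_or_eq_or_eq_sub_two hA hk hm).resolve_left hk' with h | h
  · exact h
  rcases (hv.arc_sub_one_or_eq_or_eq_sub_two hA hm hk).resolve_left hm' with h' | h'
  · exact h'.symm
  · exact (h4 (by linear_combination h + h')).elim

theorem exists_isCloneAt_of_arc (hq : 7 ≤ q) (hodd : Odd q) {x : V} (hx : ∃ j, A x (v j)) :
    ∃ ℓ, IsCloneAt A v x ℓ := by
  have h2 : (2 : ZMod q) ≠ 0 := ZMod.ofNat_ne_zero_of_lt 2 (by omega)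
  have h3 : (3 : ZMod q) ≠ 0 := ZMod.ofNat_ne_zero_of_lt 3 (by omega)
  have h4 : (4 : ZMod q) ≠ 0 := ZMod.ofNat_ne_zero_of_lt 4 (by omega)
  have h5 : (5 : ZMod q) ≠ 0 := ZMod.ofNat_ne_zero_of_lt 5 (by omega)
  have h6 : (6 : ZMod q) ≠ 0 := ZMod.ofNat_ne_zero_of_lt 6 (by omega)
  obtain ⟨i, hout, hin⟩ := hv.exists_arc_arc_sub_two hA (by omega) hodd hx
  have out_eq : ∀ j, A x (v j) → j = i := by
    intro j hj
    rcases hv.eq_add_two_or_eq_sub_one hA hin hj with h | rfl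
    · linear_combination h
    -- `x → v (i - 3)` would force an in- or out-neighbour `v (i - 5)`, and neither fits
    exfalso
    rcases hv.arc_or_arc_sub_two hA (by omega) hj with h | h
    · rcases hv.eq_add_two_or_eq_sub_one hA hin h with h' | h'
      · exact h5 (by linear_combination -h')
      · exact h2 (by linear_combination -h')
    · rcases hv.eq_add_two_or_eq_sub_one hA h hout with h' | h'
      · exact h3 (by linear_combination h')
      · exact h6 (by linear_combination h')
  have in_eq : ∀ m, A (v m) x → m = i - 2 := by
    intro m hm
    rcases hv.arc_sub_one_or_eq_or_eq_sub_two hA hin hm with h | h | rfl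
    · exact (h3 (by linear_combination -out_eq _ h)).elim
    · exact h
    exfalso
    rcases hv.arc_sub_one_or_eq_or_eq_sub_two hA hm hin with h | h | h
    · exact h5 (by linear_combination -out_eq _ h)
    · exact h2 (by linear_combination h)
    · exact h4 (by linear_combination h)
  refine ⟨i - 1, fun j => ⟨fun h => ?_, fun h => ?_⟩, fun j => ⟨fun h => ?_, fun h => ?_⟩⟩
  · linear_combination in_eq j h
  · rwa [h, show i - 1 - 1 = i - 2 by ring]
  · linear_combination out_eq j h
  · rwa [h, sub_add_cancel]

theorem exists_arc_of_arc (hq : 7 ≤ q) (hodd : Odd q) {y z : V} (hzy : A z y)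
    (hy : ∃ j, A y (v j)) : ∃ j, A z (v j) := by
  have h1 : (1 : ZMod q) ≠ 0 := ZMod.one_ne_zero_of_lt (by omega)
  have h2 : (2 : ZMod q) ≠ 0 := ZMod.ofNat_ne_zero_of_lt 2 (by omega)
  have h3 : (3 : ZMod q) ≠ 0 := ZMod.ofNat_ne_zero_of_lt 3 (by omega)
  by_contra! hno
  obtain ⟨ℓ, hℓ⟩ := hv.exists_isCloneAt_of_arc hA hq hodd hy
  obtain ⟨k, hk, hkℓ⟩ : ∃ k, A (v k) z ∧ (k = ℓ ∨ k = ℓ + 1) := by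
    rcases hA.p21Free z y (v (ℓ + 1)) (v ℓ) hzy ((hℓ.arc_from_iff _).2 rfl) (hv.arc ℓ)
      with h | h | h
    · exact ⟨_, h.2.resolve_left (hno _), Or.inr rfl⟩
    · exact ⟨_, h.2.resolve_left (hno _), Or.inl rfl⟩
    · rcases hℓ.eq_of_adj h with h' | h'
      · exact (h1 (by linear_combination h')).elim
      · exact (h1 (by linear_combination -h')).elim
  obtain ⟨m, hm, hmℓ⟩ : ∃ m, A (v m) z ∧ (m = ℓ - 2 ∨ m = ℓ - 1) := by
    rcases hA.p21Free (v (ℓ - 2)) (v (ℓ - 1)) y z (hv.arc_of_eq (by ring))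
      ((hℓ.arc_to_iff _).2 rfl) hzy with h | h | h
    · rcases hℓ.eq_of_adj h.symm with h' | h'
      · exact (h1 (by linear_combination -h')).elim
      · exact (h3 (by linear_combination -h')).elim
    · exact ⟨_, h.2.resolve_right (hno _), Or.inl rfl⟩
    · exact ⟨_, h.2.resolve_right (hno _), Or.inr rfl⟩
  have hmk := hv.eq_of_arc_of_arc hA (by omega) hk hm (hno _) (hno _)
  rcases hkℓ with rfl | rfl <;> rcases hmℓ with rfl | rfl
  · exact h2 (by linear_combination -hmk)
  · exact h1 (by linear_combination -hmk)
  · exact h3 (by linear_combination -hmk)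
  · exact h2 (by linear_combination -hmk)

theorem exists_arc (hstrong : ∀ x y : V, Relation.ReflTransGen A x y) (hq : 7 ≤ q)
    (hodd : Odd q) (x : V) : ∃ j, A x (v j) :=
  Relation.ReflTransGen.head_induction_on (hstrong x (v 0)) ⟨0 + 1, hv.arc 0⟩
    fun hzy _ hy => hv.exists_arc_of_arc hA hq hodd hzy hy

theorem exists_arc_iff (hstrong : ∀ x y : V, Relation.ReflTransGen A x y) (hq : 7 ≤ q)
    (hodd : Odd q) : ∃ φ : V → ZMod q, (∀ i, φ (v i) = i) ∧ ∀ x y, A x y ↔ φ y = φ x + 1 := by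
  choose φ hφ using fun x =>
    hv.exists_isCloneAt_of_arc hA hq hodd (hv.exists_arc hA hstrong hq hodd x)
  refine ⟨φ, fun i => (add_right_cancel ((hφ (v i)).arc_from_iff _ |>.1 (hv.arc i))).symm,
    fun x y => ?_⟩
  have hv' := (hφ y).isInducedDirectedCycle_update hv (by omega)
  obtain ⟨ℓ, hℓ⟩ := hv'.exists_isCloneAt_of_arc hA hq hodd (hv'.exists_arc hA hstrong hq hodd x)
  simpa only [Function.update_self, (hφ x).eq_of_update hℓ (by omega)] using hℓ.arc_from_iff (φ y)

end IsInducedDirectedCycle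

theorem chromaticNumber_underlying_eq_three (hq : 2 ≤ q) (hodd : Odd q) {v : ZMod q → V}
    (hadj : ∀ i, (underlying A).Adj (v i) (v (i + 1))) (φ : V → ZMod q)
    (hφ : ∀ x y, A x y → φ y = φ x + 1) : (underlying A).chromaticNumber = 3 := by
  obtain ⟨n, rfl⟩ : ∃ n, q = n + 2 := ⟨q - 2, by omega⟩
  let cycle : SimpleGraph.cycleGraph (n + 2) →g underlying A :=
    ⟨v, fun {i j} h => by
      rcases SimpleGraph.cycleGraph_adj.mp h with h | h <;> rw [sub_eq_iff_eq_add'] at h <;> subst h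
      exacts [(hadj j).symm, hadj i]⟩
  let wrap : underlying A →g SimpleGraph.cycleGraph (n + 2) :=
    ⟨φ, fun {x y} h => by
      refine SimpleGraph.cycleGraph_adj.mpr (h.2.symm.imp (fun h => ?_) (fun h => ?_))
      exacts [sub_eq_iff_eq_add'.mpr (hφ y x h), sub_eq_iff_eq_add'.mpr (hφ x y h)]⟩
  rw [← SimpleGraph.chromaticNumber_cycleGraph_of_odd _ hq hodd]
  exact le_antisymm (SimpleGraph.chromaticNumber_mono_of_hom wrap)
    (SimpleGraph.chromaticNumber_mono_of_hom cycle)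

end

theorem stmt16_general {V : Type*} (A : V → V → Prop)
    (hasym : ∀ x y, A x y → ¬ A y x)
    (hstrong : ∀ x y : V, Relation.ReflTransGen A x y)
    (hTT3 : ¬ ∃ u v w : V, A u v ∧ A v w ∧ A u w)
    (hP21 : ¬ ∃ a b c d : V, A a b ∧ A b c ∧ A d c ∧
      ¬ (underlying A).Adj a c ∧ ¬ (underlying A).Adj a d ∧
      ¬ (underlying A).Adj b d)
    (q : ℕ) (hq7 : 7 ≤ q) (hodd : Odd q) (v : ZMod q → V)
    (hcyc : ∀ i : ZMod q, (underlying A).Adj (v i) (v (i + 1)))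
    (hind : ∀ i j : ZMod q, j ≠ i + 1 → i ≠ j + 1 → i ≠ j →
      ¬ (underlying A).Adj (v i) (v j)) :
    (∃ (φ : V → ZMod q) (e : ZMod q ≃ ZMod q),
      (∀ i, φ (v i) = e i) ∧ (∀ x y : V, A x y ↔ φ y = φ x + 1)) ∧
    (underlying A).chromaticNumber = 3 := by
  have hA : IsOrientedTT3P21Free A :=
    ⟨hasym, fun u v w h₁ h₂ h₃ => hTT3 ⟨u, v, w, h₁, h₂, h₃⟩, fun a b c d h₁ h₂ h₃ => by
      by_contra! h
      exact hP21 ⟨a, b, c, d, h₁, h₂, h₃, h⟩⟩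
  have hind' : ∀ i j, (underlying A).Adj (v i) (v j) → j = i + 1 ∨ i = j + 1 := fun i j h => by
    by_contra! hne
    exact hind i j hne.1 hne.2 (fun e => h.ne (congrArg v e)) h
  obtain ⟨φ, e, hφv, hφ⟩ : ∃ (φ : V → ZMod q) (e : ZMod q ≃ ZMod q),
      (∀ i, φ (v i) = e i) ∧ (∀ x y : V, A x y ↔ φ y = φ x + 1) := by
    rcases isInducedDirectedCycle_or_neg hA.p21Free (by omega) hcyc hind' hodd with hv | hv
    · obtain ⟨φ, hφv, hφ⟩ := hv.exists_arc_iff hA hstrong hq7 hodd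
      exact ⟨φ, Equiv.refl _, hφv, hφ⟩
    · obtain ⟨φ, hφv, hφ⟩ := hv.exists_arc_iff hA hstrong hq7 hodd
      exact ⟨φ, Equiv.neg _, fun i => by simpa using hφv (-i), hφ⟩
  exact ⟨⟨φ, e, hφv, hφ⟩,
    chromaticNumber_underlying_eq_three (by omega) hodd hcyc φ fun x y => (hφ x y).1⟩

theorem stmt16 {V : Type*} [Fintype V] (A : V → V → Prop)
    (hasym : ∀ x y, A x y → ¬ A y x)
    (hstrong : ∀ x y : V, Relation.ReflTransGen A x y)
    (hTT3 : ¬ ∃ u v w : V, A u v ∧ A v w ∧ A u w)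
    (hP21 : ¬ ∃ a b c d : V, A a b ∧ A b c ∧ A d c ∧
      ¬ (underlying A).Adj a c ∧ ¬ (underlying A).Adj a d ∧
      ¬ (underlying A).Adj b d)
    (q : ℕ) (hq7 : 7 ≤ q) (hodd : Odd q) (v : ZMod q → V)
    (hinj : Function.Injective v)
    (hcyc : ∀ i : ZMod q, (underlying A).Adj (v i) (v (i + 1)))
    (hind : ∀ i j : ZMod q, j ≠ i + 1 → i ≠ j + 1 → i ≠ j →
      ¬ (underlying A).Adj (v i) (v j)) :
    (∃ (φ : V → ZMod q) (e : ZMod q ≃ ZMod q),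
      (∀ i, φ (v i) = e i) ∧ (∀ x y : V, A x y ↔ φ y = φ x + 1)) ∧
    (underlying A).chromaticNumber = 3 :=
  stmt16_general A hasym hstrong hTT3 hP21 q hq7 hodd v hcyc hind
end
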